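/- arXiv:1611.04173 — 7 statements merged into one kernel-verified Lean document; each statement's English description precedes it below -/
import Mathlib

section
/- Let R be an integral domain and x an indeterminate. If the polynomial ring R[x] is a half-factorial domain, then R has the Z-property. -/
/-- An integral domain has the **Z-property** if whenever `a,b,c,d,e` are nonzero
nonunits with `a*b*c = d*e`, then `a*b` and `d` have a common nonunit factor or
`a*b` and `e` have a common nonunit factor. -/
def HasZProperty (R : Type*) [CommRing R] : Prop :=
  ∀ a b c d e : R,
    a ≠ 0 → b ≠ 0 → c ≠ 0 → d ≠ 0 → e ≠ 0 →
    ¬IsUnit a → ¬IsUnit b → ¬IsUnit c → ¬IsUnit d → ¬IsUnit e →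
    a * b * c = d * e →
    (∃ f : R, ¬IsUnit f ∧ f ∣ a * b ∧ f ∣ d) ∨
    (∃ f : R, ¬IsUnit f ∧ f ∣ a * b ∧ f ∣ e)

/-- A domain is **atomic** if every nonzero nonunit is a product of irreducible elements. -/
def IsAtomicDomain (R : Type*) [CommRing R] : Prop :=
  ∀ a : R, a ≠ 0 → ¬IsUnit a →
    ∃ s : Multiset R, (∀ b ∈ s, Irreducible b) ∧ s.prod = a

/-- A **half-factorial domain**: atomic, and any two factorizations of an element
into irreducibles have the same length. -/
def IsHFD (R : Type*) [CommRing R] : Prop :=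
  IsAtomicDomain R ∧
    ∀ s t : Multiset R, (∀ a ∈ s, Irreducible a) → (∀ a ∈ t, Irreducible a) →
      s.prod = t.prod → Multiset.card s = Multiset.card t

open Polynomial

/-- A linear polynomial `d X + u` is irreducible when `d, u` share no nonunit factor. -/
lemma linear_irred_of_no_common {R : Type*} [CommRing R] [IsDomain R] {d u : R}
    (hd : d ≠ 0) (hu : ¬IsUnit u)
    (H : ∀ f : R, ¬IsUnit f → f ∣ u → f ∣ d → False) :
    Irreducible (C d * X + C u) := by
  have hdeg : (C d * X + C u).degree = 1 := degree_linear hd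
  have hne : (C d * X + C u) ≠ 0 := by
    intro h0; rw [h0, degree_zero] at hdeg; exact absurd hdeg (by decide)
  constructor
  · intro hUnit
    have := degree_eq_zero_of_isUnit hUnit
    rw [hdeg] at this; exact absurd this (by decide)
  · intro p q hpq
    have hp0 : p ≠ 0 := by rintro rfl; simp at hpq; exact hne hpq
    have hq0 : q ≠ 0 := by rintro rfl; simp at hpq; exact hne hpq
    have hnd : (C d * X + C u).natDegree = 1 := natDegree_linear hd
    have hsum : p.natDegree + q.natDegree = 1 := by
      rw [hpq, natDegree_mul hp0 hq0] at hnd; exact hnd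
    have hc0 : (C d * X + C u).coeff 0 = u := by simp
    have hc1 : (C d * X + C u).coeff 1 = d := by simp
    rcases Nat.eq_zero_or_pos p.natDegree with hp | hp
    · left
      obtain ⟨r, rfl⟩ : ∃ r, p = C r := ⟨p.coeff 0, eq_C_of_natDegree_eq_zero hp⟩
      have hru : r ∣ u := ⟨q.coeff 0, by rw [← hc0, hpq, coeff_C_mul]⟩
      have hrd : r ∣ d := ⟨q.coeff 1, by rw [← hc1, hpq, coeff_C_mul]⟩
      by_contra hnu
      exact H r (fun hr => hnu (isUnit_C.mpr hr)) hru hrd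
    · right
      have hq : q.natDegree = 0 := by omega
      obtain ⟨r, rfl⟩ : ∃ r, q = C r := ⟨q.coeff 0, eq_C_of_natDegree_eq_zero hq⟩
      have hru : r ∣ u := ⟨p.coeff 0, by rw [← hc0, hpq, coeff_mul_C, mul_comm]⟩
      have hrd : r ∣ d := ⟨p.coeff 1, by rw [← hc1, hpq, coeff_mul_C, mul_comm]⟩
      by_contra hnu
      exact H r (fun hr => hnu (isUnit_C.mpr hr)) hru hrd

/-- If the polynomial ring `R[x]` over an integral domain `R` is a
half-factorial domain, then `R` has the Z-property. -/
theorem polynomial_hfd_implies_zproperty (R : Type*) [CommRing R] [IsDomain R]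
    (h : IsHFD (Polynomial R)) : HasZProperty R := by
  intro a b c d e ha hb hc hd he hua hub huc hud hue heq
  by_contra hcon
  push_neg at hcon
  obtain ⟨h1, h2⟩ := hcon
  have hab : a * b ≠ 0 := mul_ne_zero ha hb
  have huab : ¬IsUnit (a * b) := fun hu => hua (isUnit_of_mul_isUnit_left hu)
  -- the two irreducible linear factors
  have hp1 : Irreducible (C d * X + C (a * b)) :=
    linear_irred_of_no_common hd huab (fun f hf hfu hfd => h1 f hf hfu hfd)
  have hp2 : Irreducible (C e * X + C (a * b)) :=
    linear_irred_of_no_common he huab (fun f hf hfu hfe => h2 f hf hfu hfe)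
  -- the quadratic cofactor
  set q : Polynomial R := C c * X ^ 2 + C (d + e) * X + C (a * b) with hqdef
  have hqdeg : q.degree = 2 := degree_quadratic hc
  have hq0 : q ≠ 0 := by intro h0; rw [h0, degree_zero] at hqdeg; exact absurd hqdeg (by decide)
  have hqu : ¬IsUnit q := by
    intro hUnit
    have := degree_eq_zero_of_isUnit hUnit
    rw [hqdeg] at this; exact absurd this (by decide)
  -- key identity
  have hCe : (C a * C b * C c : Polynomial R) = C d * C e := by
    rw [← C_mul, ← C_mul, ← C_mul, heq]
  have key : (C (a * b) : Polynomial R) * q = (C d * X + C (a * b)) * (C e * X + C (a * b)) := by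
    rw [hqdef]
    simp only [C_mul, C_add]
    linear_combination (X : Polynomial R) ^ 2 * hCe
  -- factor the constants and the quadratic
  obtain ⟨sa, hsa, hsap⟩ := h.1 (C a) (C_ne_zero.mpr ha) (fun hu => hua (isUnit_C.mp hu))
  obtain ⟨sb, hsb, hsbp⟩ := h.1 (C b) (C_ne_zero.mpr hb) (fun hu => hub (isUnit_C.mp hu))
  obtain ⟨sq, hsq, hsqp⟩ := h.1 q hq0 hqu
  have cardpos : ∀ (s : Multiset (Polynomial R)) (x : Polynomial R),
      s.prod = x → ¬IsUnit x → 0 < Multiset.card s := by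
    intro s x hp hx
    rcases Multiset.empty_or_exists_mem s with rfl | ⟨y, hy⟩
    · simp at hp; exact absurd (hp ▸ isUnit_one) hx
    · exact Multiset.card_pos.mpr (fun h0 => by simp [h0] at hy)
  have ca := cardpos sa (C a) hsap (fun hu => hua (isUnit_C.mp hu))
  have cb := cardpos sb (C b) hsbp (fun hu => hub (isUnit_C.mp hu))
  have cq := cardpos sq q hsqp hqu
  have hbig : ∀ x ∈ sa + sb + sq, Irreducible x := by
    intro x hx
    simp only [Multiset.mem_add] at hx
    rcases hx with (hx | hx) | hx
    exacts [hsa x hx, hsb x hx, hsq x hx]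
  have hsmall : ∀ x ∈ ({C d * X + C (a * b), C e * X + C (a * b)} : Multiset (Polynomial R)),
      Irreducible x := by
    intro x hx
    rw [Multiset.insert_eq_cons, Multiset.mem_cons, Multiset.mem_singleton] at hx
    rcases hx with h1x | h2x
    · rw [h1x]; exact hp1
    · rw [h2x]; exact hp2
  have hprodeq : (sa + sb + sq).prod =
      ({C d * X + C (a * b), C e * X + C (a * b)} : Multiset (Polynomial R)).prod := by
    rw [Multiset.prod_add, Multiset.prod_add, hsap, hsbp, hsqp, ← C_mul, key]
    simp [Multiset.prod_cons]
  have := h.2 _ _ hbig hsmall hprodeq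
  have hc2 : Multiset.card ({C d * X + C (a * b), C e * X + C (a * b)} :
      Multiset (Polynomial R)) = 2 := rfl
  rw [hc2] at this
  simp only [Multiset.card_add] at this
  omega
end

section
/- Let R be an atomic integral domain. If R has the Z-property, then R is a half-factorial domain. -/
set_option linter.unusedSectionVars false

namespace ZProp

variable {R : Type*} [CommRing R] [IsDomain R]

lemma exists_cons_of_card_pos {s : Multiset R} (h : 0 < Multiset.card s) :
    ∃ a t, s = a ::ₘ t := by
  obtain ⟨a, ha⟩ := Multiset.exists_mem_of_ne_zero (s := s) (by intro h0; rw [h0] at h; simp at h)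
  obtain ⟨t, ht⟩ := Multiset.exists_cons_of_mem ha
  exact ⟨a, t, ht⟩

lemma prod_irred_ne_zero {s : Multiset R} (hs : ∀ a ∈ s, Irreducible a) : s.prod ≠ 0 :=
  Multiset.prod_ne_zero (fun h0 => (hs 0 h0).ne_zero rfl)

lemma prod_not_unit {s : Multiset R} (hs : ∀ a ∈ s, Irreducible a) (hne : s ≠ 0) :
    ¬IsUnit s.prod := by
  obtain ⟨a, ha⟩ := Multiset.exists_mem_of_ne_zero hne
  intro hu
  exact (hs a ha).not_isUnit (isUnit_of_dvd_unit (Multiset.dvd_prod ha) hu)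

lemma irred_dvd_of_nonunit_dvd {f p : R} (hp : Irreducible p) (hf : ¬IsUnit f)
    (h : f ∣ p) : p ∣ f := by
  obtain ⟨x, hx⟩ := h
  rcases hp.isUnit_or_isUnit hx with h1 | h2
  · exact absurd h1 hf
  · obtain ⟨u, hu⟩ := h2
    exact ⟨↑u⁻¹, by rw [hx, ← hu, Units.mul_inv_cancel_right]⟩


lemma card_eq_one_of_prod_irred {t : Multiset R} (ht : ∀ a ∈ t, Irreducible a)
    (hp : Irreducible t.prod) : Multiset.card t = 1 := by
  rcases Nat.lt_or_ge (Multiset.card t) 2 with hlt | hge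
  · interval_cases h : Multiset.card t
    · rw [Multiset.card_eq_zero.mp h] at hp
      exact absurd isUnit_one hp.not_isUnit
    · rfl
  · obtain ⟨b, t', rfl⟩ := exists_cons_of_card_pos (s := t) (by omega)
    have ht'0 : t' ≠ 0 := by
      intro h0
      rw [h0] at hge; simp at hge
    rcases hp.isUnit_or_isUnit (Multiset.prod_cons b t') with h1 | h1
    · exact absurd h1 (ht b (Multiset.mem_cons_self b t')).not_isUnit
    · exact absurd h1 (prod_not_unit (fun a ha => ht a (Multiset.mem_cons_of_mem ha)) ht'0)

lemma aux_false {α α' β₁ β₂ c f : R}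
    (hα : Irreducible α) (hα' : Irreducible α')
    (hβ₁ : Irreducible β₁) (hβ₂ : Irreducible β₂)
    (hc : ¬IsUnit c) (hf : ¬IsUnit f)
    (hfd : f ∣ β₁ * β₂) (hfa : f ∣ α)
    (heq : β₁ * β₂ * c = α * α') : False := by
  have hαd : α ∣ β₁ * β₂ := (irred_dvd_of_nonunit_dvd hα hf hfa).trans hfd
  obtain ⟨g, hg⟩ := hαd
  have h1 : α * (g * c) = α * α' := by rw [← mul_assoc, ← hg]; exact heq
  have h2 : g * c = α' := mul_left_cancel₀ hα.ne_zero h1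
  rcases hα'.isUnit_or_isUnit h2.symm with hgu | hcu
  · obtain ⟨u, hu⟩ := hgu
    have hq : α = β₁ * (β₂ * ↑u⁻¹) := by
      rw [← mul_assoc, hg, ← hu, Units.mul_inv_cancel_right]
    rcases hα.isUnit_or_isUnit hq with h3 | h3
    · exact hβ₁.not_isUnit h3
    · exact hβ₂.not_isUnit (isUnit_of_mul_isUnit_left h3)
  · exact hc hcu

lemma two_atoms (hZ : HasZProperty R) {α₁ α₂ : R}
    (h1 : Irreducible α₁) (h2 : Irreducible α₂)
    {t : Multiset R} (ht : ∀ a ∈ t, Irreducible a)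
    (heq : α₁ * α₂ = t.prod) : Multiset.card t = 2 := by
  rcases Nat.lt_or_ge (Multiset.card t) 3 with hlt | hge
  · interval_cases h : Multiset.card t
    · rw [Multiset.card_eq_zero.mp h] at heq
      simp only [Multiset.prod_zero] at heq
      exact absurd (IsUnit.of_mul_eq_one _ heq) h1.not_isUnit
    · obtain ⟨a, rfl⟩ := Multiset.card_eq_one.mp h
      rw [Multiset.prod_singleton] at heq
      rcases (ht a (Multiset.mem_singleton_self a)).isUnit_or_isUnit heq.symm with hu | hu
      · exact absurd hu h1.not_isUnit
      · exact absurd hu h2.not_isUnit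
    · rfl
  · exfalso
    obtain ⟨β₁, t₁, rfl⟩ := exists_cons_of_card_pos (s := t) (by omega)
    rw [Multiset.card_cons] at hge
    obtain ⟨β₂, u, rfl⟩ := exists_cons_of_card_pos (s := t₁) (by omega)
    rw [Multiset.card_cons] at hge
    have hu0 : u ≠ 0 := by intro h0; rw [h0] at hge; simp at hge
    have hβ₁ : Irreducible β₁ := ht β₁ (by simp)
    have hβ₂ : Irreducible β₂ := ht β₂ (by simp)
    have hui : ∀ a ∈ u, Irreducible a := fun a ha => ht a (by simp [ha])
    have hcnu : ¬IsUnit u.prod := prod_not_unit hui hu0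
    have hc0 : u.prod ≠ 0 := prod_irred_ne_zero hui
    have heqZ : β₁ * β₂ * u.prod = α₁ * α₂ := by
      rw [Multiset.prod_cons, Multiset.prod_cons] at heq
      rw [mul_assoc, ← heq]
    rcases hZ β₁ β₂ u.prod α₁ α₂ hβ₁.ne_zero hβ₂.ne_zero hc0 h1.ne_zero h2.ne_zero
        hβ₁.not_isUnit hβ₂.not_isUnit hcnu h1.not_isUnit h2.not_isUnit heqZ with
      ⟨f, hf, hfd, hfa⟩ | ⟨f, hf, hfd, hfa⟩
    · exact aux_false h1 h2 hβ₁ hβ₂ hcnu hf hfd hfa heqZ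
    · exact aux_false h2 h1 hβ₁ hβ₂ hcnu hf hfd hfa (by rw [heqZ, mul_comm])

lemma cofactor_irred (hA : IsAtomicDomain R) (hZ : HasZProperty R)
    {α₁ α₂ π h : R} (h1 : Irreducible α₁) (h2 : Irreducible α₂)
    (hπ : Irreducible π) (heq : α₁ * α₂ = π * h) : Irreducible h := by
  have hh0 : h ≠ 0 := by
    intro h0
    rw [h0, mul_zero] at heq
    exact mul_ne_zero h1.ne_zero h2.ne_zero heq
  have hhu : ¬IsUnit h := by
    intro hu
    obtain ⟨u, hu'⟩ := hu
    have hq : π = α₁ * (α₂ * ↑u⁻¹) := by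
      rw [← mul_assoc, heq, ← hu', Units.mul_inv_cancel_right]
    rcases hπ.isUnit_or_isUnit hq with h3 | h3
    · exact h1.not_isUnit h3
    · exact h2.not_isUnit (isUnit_of_mul_isUnit_left h3)
  obtain ⟨v, hv, hvp⟩ := hA h hh0 hhu
  have hvirr : ∀ a ∈ π ::ₘ v, Irreducible a := by
    intro a ha
    rcases Multiset.mem_cons.mp ha with h' | h'
    · exact h' ▸ hπ
    · exact hv a h'
  have hcard : Multiset.card (π ::ₘ v) = 2 :=
    two_atoms hZ h1 h2 hvirr (by rw [Multiset.prod_cons, hvp, ← heq])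
  rw [Multiset.card_cons] at hcard
  have : Multiset.card v = 1 := by omega
  obtain ⟨γ, rfl⟩ := Multiset.card_eq_one.mp this
  rw [Multiset.prod_singleton] at hvp
  exact hvp ▸ hv γ (Multiset.mem_singleton_self γ)

lemma key_lemma (hA : IsAtomicDomain R) (hZ : HasZProperty R) :
    ∀ n : ℕ, ∀ s t : Multiset R, Multiset.card s = n →
      (∀ a ∈ s, Irreducible a) → (∀ a ∈ t, Irreducible a) →
      s.prod = t.prod → Multiset.card t = n := by
  intro n
  induction n using Nat.strong_induction_on with
  | _ n ih =>
  intro s t hcard hs ht heq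
  rcases Nat.lt_or_ge n 3 with hn | hn
  · interval_cases n
    · -- n = 0
      rw [Multiset.card_eq_zero.mp hcard] at heq
      simp only [Multiset.prod_zero] at heq
      rw [Multiset.card_eq_zero]
      by_contra h0
      exact prod_not_unit ht h0 (heq ▸ isUnit_one)
    · -- n = 1
      obtain ⟨a, rfl⟩ := Multiset.card_eq_one.mp hcard
      rw [Multiset.prod_singleton] at heq
      exact card_eq_one_of_prod_irred ht (heq ▸ hs a (Multiset.mem_singleton_self a))
    · -- n = 2
      obtain ⟨x, y, rfl⟩ := Multiset.card_eq_two.mp hcard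
      have hxy : x * y = t.prod := by
        rw [← heq]; simp [Multiset.prod_cons]
      exact two_atoms hZ (hs x (by simp)) (hs y (by simp)) ht hxy
  · -- n ≥ 3
    obtain ⟨α₁, s₁, rfl⟩ := exists_cons_of_card_pos (s := s) (by omega)
    rw [Multiset.card_cons] at hcard
    obtain ⟨α₂, s', rfl⟩ := exists_cons_of_card_pos (s := s₁) (by omega)
    rw [Multiset.card_cons] at hcard
    have hcs' : Multiset.card s' = n - 2 := by omega
    have hα₁ : Irreducible α₁ := hs α₁ (by simp)
    have hα₂ : Irreducible α₂ := hs α₂ (by simp)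
    have hs' : ∀ a ∈ s', Irreducible a := fun a ha => hs a (by simp [ha])
    have hs'0 : s' ≠ 0 := by
      intro h0; rw [h0] at hcs'; simp at hcs'; omega
    have hs'nu : ¬IsUnit s'.prod := prod_not_unit hs' hs'0
    have hs'z : s'.prod ≠ 0 := prod_irred_ne_zero hs'
    -- t has at least 2 elements
    have htcard : 2 ≤ Multiset.card t := by
      by_contra hlt
      push_neg at hlt
      interval_cases h : Multiset.card t
      · rw [Multiset.card_eq_zero.mp h] at heq
        simp only [Multiset.prod_zero] at heq
        exact prod_not_unit hs (by simp) (heq ▸ isUnit_one)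
      · obtain ⟨b, rfl⟩ := Multiset.card_eq_one.mp h
        rw [Multiset.prod_singleton] at heq
        have := card_eq_one_of_prod_irred hs (heq ▸ ht b (Multiset.mem_singleton_self b))
        simp [Multiset.card_cons] at this
    obtain ⟨β₁, t', rfl⟩ := exists_cons_of_card_pos (s := t) (by omega)
    rw [Multiset.card_cons] at htcard
    have hβ₁ : Irreducible β₁ := ht β₁ (by simp)
    have ht' : ∀ a ∈ t', Irreducible a := fun a ha => ht a (by simp [ha])
    have ht'0 : t' ≠ 0 := by
      intro h0; rw [h0] at htcard; simp at htcard
    have ht'nu : ¬IsUnit t'.prod := prod_not_unit ht' ht'0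
    have ht'z : t'.prod ≠ 0 := prod_irred_ne_zero ht'
    have heqZ : α₁ * α₂ * s'.prod = β₁ * t'.prod := by
      simp only [Multiset.prod_cons] at heq
      rw [mul_assoc, heq]
    rcases hZ α₁ α₂ s'.prod β₁ t'.prod hα₁.ne_zero hα₂.ne_zero hs'z hβ₁.ne_zero ht'z
        hα₁.not_isUnit hα₂.not_isUnit hs'nu hβ₁.not_isUnit ht'nu heqZ with
      ⟨f, hf, hfab, hfd⟩ | ⟨f, hf, hfab, hfd⟩
    · -- Case A : f ∣ β₁
      have hβdvd : β₁ ∣ α₁ * α₂ := (irred_dvd_of_nonunit_dvd hβ₁ hf hfd).trans hfab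
      obtain ⟨g, hg⟩ := hβdvd
      have hgI : Irreducible g := cofactor_irred hA hZ hα₁ hα₂ hβ₁ hg
      have hc : g * s'.prod = t'.prod :=
        mul_left_cancel₀ hβ₁.ne_zero (by rw [← mul_assoc, ← hg]; exact heqZ)
      have hgirr : ∀ a ∈ g ::ₘ s', Irreducible a := by
        intro a ha
        rcases Multiset.mem_cons.mp ha with h' | h'
        · exact h' ▸ hgI
        · exact hs' a h'
      have hrec := ih (n - 1) (by omega) (g ::ₘ s') t'
        (by rw [Multiset.card_cons]; omega) hgirr ht'
        (by rw [Multiset.prod_cons]; exact hc)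
      rw [Multiset.card_cons]
      omega
    · -- Case B : f ∣ t'.prod
      have hf0 : f ≠ 0 := by
        intro h0
        rw [h0, zero_dvd_iff] at hfab
        exact mul_ne_zero hα₁.ne_zero hα₂.ne_zero hfab
      obtain ⟨v, hv, hvp⟩ := hA f hf0 hf
      have hv0 : v ≠ 0 := by
        intro h0
        rw [h0] at hvp
        simp only [Multiset.prod_zero] at hvp
        exact hf (hvp ▸ isUnit_one)
      obtain ⟨π, hπv⟩ := Multiset.exists_mem_of_ne_zero hv0
      have hπ : Irreducible π := hv π hπv
      have hπf : π ∣ f := hvp ▸ Multiset.dvd_prod hπv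
      obtain ⟨h, hh⟩ := hπf.trans hfab
      have hhI : Irreducible h := cofactor_irred hA hZ hα₁ hα₂ hπ hh
      obtain ⟨w, hw⟩ := hπf.trans hfd
      have hw0 : w ≠ 0 := by
        intro h0
        rw [h0, mul_zero] at hw
        exact ht'z hw
      have hcancel : h * s'.prod = β₁ * w :=
        mul_left_cancel₀ hπ.ne_zero
          (by rw [← mul_assoc, ← hh, heqZ, hw]; ring)
      by_cases hwu : IsUnit w
      · exfalso
        obtain ⟨u, hu⟩ := hwu
        have hq : β₁ = h * (s'.prod * ↑u⁻¹) := by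
          rw [← mul_assoc, hcancel, ← hu, Units.mul_inv_cancel_right]
        rcases hβ₁.isUnit_or_isUnit hq with h3 | h3
        · exact hhI.not_isUnit h3
        · exact hs'nu (isUnit_of_mul_isUnit_left h3)
      · obtain ⟨u, hui, hup⟩ := hA w hw0 hwu
        have hbu : ∀ a ∈ β₁ ::ₘ u, Irreducible a := by
          intro a ha
          rcases Multiset.mem_cons.mp ha with h' | h'
          · exact h' ▸ hβ₁
          · exact hui a h'
        have hhs : ∀ a ∈ h ::ₘ s', Irreducible a := by
          intro a ha
          rcases Multiset.mem_cons.mp ha with h' | h'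
          · exact h' ▸ hhI
          · exact hs' a h'
        have hi := ih (n - 1) (by omega) (h ::ₘ s') (β₁ ::ₘ u)
          (by rw [Multiset.card_cons]; omega) hhs hbu
          (by rw [Multiset.prod_cons, Multiset.prod_cons, hup]; exact hcancel)
        rw [Multiset.card_cons] at hi
        have hπu : ∀ a ∈ π ::ₘ u, Irreducible a := by
          intro a ha
          rcases Multiset.mem_cons.mp ha with h' | h'
          · exact h' ▸ hπ
          · exact hui a h'
        have hii := ih (n - 1) (by omega) (π ::ₘ u) t'
          (by rw [Multiset.card_cons]; omega) hπu ht'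
          (by rw [Multiset.prod_cons, hup, ← hw])
        rw [Multiset.card_cons]
        omega

end ZProp

/-- An atomic integral domain with the Z-property is a
half-factorial domain. -/
theorem zproperty_implies_hfd (R : Type*) [CommRing R] [IsDomain R]
    (hAtomic : IsAtomicDomain R) (hZ : HasZProperty R) : IsHFD R := by
  refine ⟨hAtomic, fun s t hs ht heq => ?_⟩
  exact (ZProp.key_lemma hAtomic hZ (Multiset.card s) s t rfl hs ht heq).symm
end

section
/- Let R be an atomic, integrally closed integral domain satisfying condition (C): for every primitive ideal I = (a₀,a₁) of R generated by two elements there exists an irreducible element α ∈ R with α ∈ I_v. Then R is a half-factorial domain if and only if R has the Z-property. -/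
/-- The divisorial closure `I_v = (I⁻¹)⁻¹` of an ideal `I`, as a fractional ideal
of the quotient field `K`, where `I⁻¹ = {x ∈ K : xI ⊆ R}` is realized as `1 / I`. -/
noncomputable def vIdeal {R : Type*} [CommRing R] [IsDomain R] (K : Type*) [Field K]
    [Algebra R K] [IsFractionRing R K] (I : Ideal R) :
    FractionalIdeal (nonZeroDivisors R) K :=
  1 / (1 / (I : FractionalIdeal (nonZeroDivisors R) K))

/-- A **primitive ideal** is an ideal generated by the coefficients of a primitive
polynomial (one whose coefficients have no common nonunit factor). -/
def IsPrimitiveIdeal {R : Type*} [CommRing R] (I : Ideal R) : Prop :=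
  ∃ f : Polynomial R, f.IsPrimitive ∧ I = Ideal.span (Set.range f.coeff)


section VLemmas
variable {R : Type*} [CommRing R] [IsDomain R] {K : Type*} [Field K]
    [Algebra R K] [IsFractionRing R K]


lemma coeIdeal_ne_zero_of_mem {I : Ideal R} {x : R} (hx : x ≠ 0) (hxI : x ∈ I) :
    (I : FractionalIdeal (nonZeroDivisors R) K) ≠ 0 :=
  FractionalIdeal.coeIdeal_ne_zero.2 (fun h => hx (by rw [h] at hxI; simpa using hxI))

lemma one_div_coeIdeal_ne_zero {I : Ideal R}
    (hI : (I : FractionalIdeal (nonZeroDivisors R) K) ≠ 0) :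
    (1 : FractionalIdeal (nonZeroDivisors R) K) / (I : FractionalIdeal (nonZeroDivisors R) K) ≠ 0 := by
  intro h
  have hone : (1 : K) ∈ (1 : FractionalIdeal (nonZeroDivisors R) K) /
      (I : FractionalIdeal (nonZeroDivisors R) K) := by
    rw [FractionalIdeal.mem_div_iff_of_ne_zero hI]
    intro y hy
    obtain ⟨y', _, rfl⟩ := (FractionalIdeal.mem_coeIdeal _).1 hy
    rw [one_mul]
    exact (FractionalIdeal.mem_one_iff _).2 ⟨y', rfl⟩
  rw [h, FractionalIdeal.mem_zero_iff] at hone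
  exact one_ne_zero hone

lemma mem_vIdeal_of_mem {I : Ideal R}
    (hI : (I : FractionalIdeal (nonZeroDivisors R) K) ≠ 0) {x : R} (hx : x ∈ I) :
    algebraMap R K x ∈ vIdeal K I := by
  rw [vIdeal, FractionalIdeal.mem_div_iff_of_ne_zero (one_div_coeIdeal_ne_zero hI)]
  intro y hy
  rw [FractionalIdeal.mem_div_iff_of_ne_zero hI] at hy
  have := hy (algebraMap R K x) ((FractionalIdeal.mem_coeIdeal _).2 ⟨x, hx, rfl⟩)
  rwa [mul_comm]

lemma mul_mem_vIdeal_mul {I J : Ideal R}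
    (hI : (I : FractionalIdeal (nonZeroDivisors R) K) ≠ 0)
    (hJ : (J : FractionalIdeal (nonZeroDivisors R) K) ≠ 0)
    {x y : K} (hx : x ∈ vIdeal K I) (hy : y ∈ vIdeal K J) :
    x * y ∈ vIdeal K (I * J) := by
  have hIJ : ((I * J : Ideal R) : FractionalIdeal (nonZeroDivisors R) K) ≠ 0 := by
    rw [FractionalIdeal.coeIdeal_ne_zero] at hI hJ ⊢
    rw [Ne, Ideal.mul_eq_bot]
    tauto
  rw [vIdeal, FractionalIdeal.mem_div_iff_of_ne_zero (one_div_coeIdeal_ne_zero hIJ)]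
  intro q hq
  rw [FractionalIdeal.mem_div_iff_of_ne_zero hIJ] at hq
  have hqy : q * y ∈ (1 : FractionalIdeal (nonZeroDivisors R) K) /
      (I : FractionalIdeal (nonZeroDivisors R) K) := by
    rw [FractionalIdeal.mem_div_iff_of_ne_zero hI]
    intro i hi
    have hqi : q * i ∈ (1 : FractionalIdeal (nonZeroDivisors R) K) /
        (J : FractionalIdeal (nonZeroDivisors R) K) := by
      rw [FractionalIdeal.mem_div_iff_of_ne_zero hJ]
      intro j hj
      have hij : i * j ∈ ((I * J : Ideal R) : FractionalIdeal (nonZeroDivisors R) K) := by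
        rw [FractionalIdeal.coeIdeal_mul]
        exact FractionalIdeal.mul_mem_mul hi hj
      have := hq (i * j) hij
      rwa [show q * (i * j) = q * i * j by ring] at this
    have := (FractionalIdeal.mem_div_iff_of_ne_zero (one_div_coeIdeal_ne_zero hJ)).1 hy (q*i) hqi
    rwa [show y * (q * i) = q * y * i by ring] at this
  have := (FractionalIdeal.mem_div_iff_of_ne_zero (one_div_coeIdeal_ne_zero hI)).1 hx (q*y) hqy
  rwa [show x * (q * y) = x * y * q by ring] at this

lemma vIdeal_mono {I J : Ideal R}
    (hI : (I : FractionalIdeal (nonZeroDivisors R) K) ≠ 0) (hIJ : I ≤ J) :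
    vIdeal K I ≤ vIdeal (R := R) K J := by
  have hJ : (J : FractionalIdeal (nonZeroDivisors R) K) ≠ 0 :=
    FractionalIdeal.coeIdeal_ne_zero.2 fun h =>
      (FractionalIdeal.coeIdeal_ne_zero.1 hI) (le_bot_iff.1 (h ▸ hIJ))
  rw [← FractionalIdeal.coe_le_coe]
  intro x hx
  rw [FractionalIdeal.mem_coe] at hx ⊢
  rw [vIdeal, FractionalIdeal.mem_div_iff_of_ne_zero (one_div_coeIdeal_ne_zero hJ)]
  intro q hq
  have hq' : q ∈ (1 : FractionalIdeal (nonZeroDivisors R) K) /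
      (I : FractionalIdeal (nonZeroDivisors R) K) := by
    rw [FractionalIdeal.mem_div_iff_of_ne_zero hI]
    intro i hi
    obtain ⟨i', hi', rfl⟩ := (FractionalIdeal.mem_coeIdeal _).1 hi
    exact (FractionalIdeal.mem_div_iff_of_ne_zero hJ).1 hq _
      ((FractionalIdeal.mem_coeIdeal _).2 ⟨i', hIJ hi', rfl⟩)
  rw [vIdeal] at hx
  exact (FractionalIdeal.mem_div_iff_of_ne_zero (one_div_coeIdeal_ne_zero hI)).1 hx q hq'

lemma dvd_of_mem_vIdeal_span_singleton {x z : R} (hx : x ≠ 0)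
    (hz : algebraMap R K z ∈ vIdeal K (Ideal.span {x})) : x ∣ z := by
  have hxK : algebraMap R K x ≠ 0 := fun h => hx (IsFractionRing.to_map_eq_zero_iff.1 h)
  have hq : (algebraMap R K x)⁻¹ ∈ (1 : FractionalIdeal (nonZeroDivisors R) K) /
      ((Ideal.span {x} : Ideal R) : FractionalIdeal (nonZeroDivisors R) K) := by
    rw [FractionalIdeal.mem_div_iff_of_ne_zero
      (coeIdeal_ne_zero_of_mem hx (Ideal.mem_span_singleton.2 dvd_rfl))]
    intro m hm
    obtain ⟨m', hm', rfl⟩ := (FractionalIdeal.mem_coeIdeal _).1 hm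
    obtain ⟨r, rfl⟩ := Ideal.mem_span_singleton.1 hm'
    rw [map_mul, show (algebraMap R K x)⁻¹ * (algebraMap R K x * algebraMap R K r)
      = (algebraMap R K x)⁻¹ * algebraMap R K x * algebraMap R K r by ring,
      inv_mul_cancel₀ hxK, one_mul]
    exact (FractionalIdeal.mem_one_iff _).2 ⟨r, rfl⟩
  rw [vIdeal] at hz
  have := (FractionalIdeal.mem_div_iff_of_ne_zero
    (one_div_coeIdeal_ne_zero
      (coeIdeal_ne_zero_of_mem hx (Ideal.mem_span_singleton.2 dvd_rfl)))).1 hz _ hq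
  obtain ⟨w, hw⟩ := (FractionalIdeal.mem_one_iff _).1 this
  refine ⟨w, ?_⟩
  apply IsFractionRing.injective R K
  rw [map_mul]
  field_simp at hw
  rw [← hw]
  ring

end VLemmas

section Multisets


variable {R : Type*} [CommRing R] [IsDomain R]

lemma ZP.exists_cons {s : Multiset R} (h : s ≠ 0) : ∃ a t, s = a ::ₘ t := by
  classical
  obtain ⟨a, ha⟩ := Multiset.exists_mem_of_ne_zero h
  exact ⟨a, s.erase a, (Multiset.cons_erase ha).symm⟩

lemma ZP.eq_zero_of_prod_isUnit {s : Multiset R} (hs : ∀ a ∈ s, Irreducible a)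
    (h : IsUnit s.prod) : s = 0 := by
  by_contra h0
  obtain ⟨a, ha⟩ := Multiset.exists_mem_of_ne_zero h0
  exact (hs a ha).not_isUnit (isUnit_of_dvd_unit (Multiset.dvd_prod ha) h)

lemma ZP.prod_not_isUnit {s : Multiset R} (hs : ∀ a ∈ s, Irreducible a)
    (h0 : s ≠ 0) : ¬IsUnit s.prod := fun h => h0 (ZP.eq_zero_of_prod_isUnit hs h)

lemma ZP.prod_ne_zero {s : Multiset R} (hs : ∀ a ∈ s, Irreducible a) :
    s.prod ≠ 0 :=
  Multiset.prod_ne_zero (fun h0 => (hs 0 h0).ne_zero rfl)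

lemma ZP.card_eq_one_of_irreducible {x : R} (hx : Irreducible x) {t : Multiset R}
    (ht : ∀ a ∈ t, Irreducible a) (h : x = t.prod) : Multiset.card t = 1 := by
  rcases eq_or_ne t 0 with rfl | h0
  · exact absurd (h ▸ isUnit_one) hx.not_isUnit
  obtain ⟨a, t', rfl⟩ := ZP.exists_cons h0
  rw [Multiset.prod_cons] at h
  rcases hx.isUnit_or_isUnit h with hu | hu
  · exact absurd hu (ht a (Multiset.mem_cons_self a t')).not_isUnit
  · have := ZP.eq_zero_of_prod_isUnit (fun b hb => ht b (Multiset.mem_cons_of_mem hb)) hu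
    simp [this]

lemma ZP.dvd_of_common {f p x : R} (hp : Irreducible p) (hfU : ¬IsUnit f)
    (hfp : f ∣ p) (hfx : f ∣ x) : p ∣ x := by
  obtain ⟨w, hw⟩ := hfp
  have hwU : IsUnit w := (hp.isUnit_or_isUnit hw).resolve_left hfU
  have hassoc : Associated f p := ⟨hwU.unit, by rw [hwU.unit_spec, ← hw]⟩
  exact hassoc.symm.dvd.trans hfx

/-- If an irreducible `π` divides a product `α * β` of two irreducibles in a domain
with the Z-property, then the cofactor is irreducible. -/
lemma ZP.cofactor_irreducible {R : Type*} [CommRing R] [IsDomain R]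
    (hZ : HasZProperty R) {α β π : R} (hα : Irreducible α) (hβ : Irreducible β)
    (hπ : Irreducible π) (h : π ∣ α * β) : ∃ g, Irreducible g ∧ α * β = π * g := by
  obtain ⟨m, hm⟩ := h
  have hαβ0 : α * β ≠ 0 := mul_ne_zero hα.ne_zero hβ.ne_zero
  have hm0 : m ≠ 0 := by rintro rfl; rw [mul_zero] at hm; exact hαβ0 hm
  have hmU : ¬IsUnit m := by
    intro hmU
    rcases (irreducible_mul_isUnit hmU).2 hπ |>.isUnit_or_isUnit hm.symm with h1 | h1
    · exact hα.not_isUnit h1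
    · exact hβ.not_isUnit h1
  refine ⟨m, ?_, hm⟩
  by_contra hmirr
  rw [irreducible_iff] at hmirr
  push_neg at hmirr
  obtain ⟨x, y, hxy, hxU, hyU⟩ := hmirr hmU
  have hx0 : x ≠ 0 := by rintro rfl; simp at hxy; exact hm0 hxy
  have hy0 : y ≠ 0 := by rintro rfl; simp at hxy; exact hm0 hxy
  have heq : π * x * y = α * β := by rw [hm, hxy]; ring
  rcases hZ π x y α β hπ.ne_zero hx0 hy0 hα.ne_zero hβ.ne_zero
      hπ.not_isUnit hxU hyU hα.not_isUnit hβ.not_isUnit heq with ⟨f, hfU, hf1, hf2⟩ | ⟨f, hfU, hf1, hf2⟩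
  · -- f ∣ π * x, f ∣ α
    have hαdvd : α ∣ π * x := ZP.dvd_of_common hα hfU hf2 hf1
    obtain ⟨v, hv⟩ := hαdvd
    have hβeq : β = v * y := by
      apply mul_left_cancel₀ hα.ne_zero
      linear_combination -heq + y * hv
    have hvU : IsUnit v := (hβ.isUnit_or_isUnit hβeq).resolve_right hyU
    rcases ((irreducible_mul_isUnit hvU).2 hα).isUnit_or_isUnit hv.symm with h1 | h1
    · exact hπ.not_isUnit h1
    · exact hxU h1
  · -- f ∣ π * x, f ∣ β
    have hβdvd : β ∣ π * x := ZP.dvd_of_common hβ hfU hf2 hf1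
    obtain ⟨v, hv⟩ := hβdvd
    have hαeq : α = v * y := by
      apply mul_left_cancel₀ hβ.ne_zero
      linear_combination -heq + y * hv
    have hvU : IsUnit v := (hα.isUnit_or_isUnit hαeq).resolve_right hyU
    rcases ((irreducible_mul_isUnit hvU).2 hβ).isUnit_or_isUnit hv.symm with h1 | h1
    · exact hπ.not_isUnit h1
    · exact hxU h1

lemma ZP.length_eq {R : Type*} [CommRing R] [IsDomain R]
    (hAtomic : IsAtomicDomain R) (hZ : HasZProperty R) :
    ∀ n (s t : Multiset R), Multiset.card s = n →
      (∀ a ∈ s, Irreducible a) → (∀ a ∈ t, Irreducible a) →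
      s.prod = t.prod → Multiset.card s = Multiset.card t := by
  intro n
  induction n using Nat.strong_induction_on with
  | _ n IH =>
  intro s t hcard hs ht hprod
  -- trivial small cases for t
  rcases eq_or_ne t 0 with rfl | ht0
  · simp only [Multiset.prod_zero] at hprod
    rw [ZP.eq_zero_of_prod_isUnit hs (hprod ▸ isUnit_one)]
  rcases eq_or_ne s 0 with rfl | hs0
  · simp only [Multiset.prod_zero] at hprod
    rw [ZP.eq_zero_of_prod_isUnit ht (hprod.symm ▸ isUnit_one)]
  by_cases hs1 : Multiset.card s = 1
  · obtain ⟨x, rfl⟩ := Multiset.card_eq_one.1 hs1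
    rw [hs1, ZP.card_eq_one_of_irreducible (hs x (Multiset.mem_singleton_self x)) ht
      (by simpa using hprod)]
  by_cases ht1 : Multiset.card t = 1
  · obtain ⟨x, rfl⟩ := Multiset.card_eq_one.1 ht1
    rw [ht1, ZP.card_eq_one_of_irreducible (ht x (Multiset.mem_singleton_self x)) hs
      (by simpa using hprod.symm)]
  -- now both cards ≥ 2
  have hscard2 : 2 ≤ Multiset.card s := by
    rcases Nat.lt_or_ge (Multiset.card s) 2 with h | h
    · have h' : Multiset.card s = 0 ∨ Multiset.card s = 1 := by omega
      rcases h' with h' | h'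
      · exact absurd (Multiset.card_eq_zero.1 h') hs0
      · exact absurd h' hs1
    · exact h
  have htcard2 : 2 ≤ Multiset.card t := by
    rcases Nat.lt_or_ge (Multiset.card t) 2 with h | h
    · have h' : Multiset.card t = 0 ∨ Multiset.card t = 1 := by omega
      rcases h' with h' | h'
      · exact absurd (Multiset.card_eq_zero.1 h') ht0
      · exact absurd h' ht1
    · exact h
  by_cases ht2 : Multiset.card t = 2
  · -- if card s = 2 we are done; otherwise derive a contradiction
    by_cases hs2 : Multiset.card s = 2
    · omega
    have hscard3 : 3 ≤ Multiset.card s := by omega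
    obtain ⟨s₁, s', rfl⟩ := ZP.exists_cons hs0
    have hs'0 : s' ≠ 0 := by
      intro h; rw [h] at hscard3; simp at hscard3
    obtain ⟨s₂, s'', rfl⟩ := ZP.exists_cons hs'0
    have hs''0 : s'' ≠ 0 := by
      intro h; rw [h] at hscard3; simp at hscard3
    obtain ⟨t₁, t', rfl⟩ := ZP.exists_cons ht0
    have ht'1 : Multiset.card t' = 1 := by
      simp only [Multiset.card_cons] at ht2; omega
    obtain ⟨t₂, rfl⟩ := Multiset.card_eq_one.1 ht'1
    have hs₁ : Irreducible s₁ := hs s₁ (by simp)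
    have hs₂ : Irreducible s₂ := hs s₂ (by simp)
    have ht₁ : Irreducible t₁ := ht t₁ (by simp)
    have ht₂ : Irreducible t₂ := ht t₂ (by simp)
    have hs''atoms : ∀ a ∈ s'', Irreducible a := fun a ha => hs a (by simp [ha])
    have hs''U : ¬IsUnit s''.prod := ZP.prod_not_isUnit hs''atoms hs''0
    have hs''ne : s''.prod ≠ 0 := ZP.prod_ne_zero hs''atoms
    simp only [Multiset.prod_cons, Multiset.prod_singleton] at hprod
    have heq : s₁ * s₂ * s''.prod = t₁ * t₂ := by rw [← hprod]; ring
    rcases hZ s₁ s₂ s''.prod t₁ t₂ hs₁.ne_zero hs₂.ne_zero hs''ne ht₁.ne_zero ht₂.ne_zero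
        hs₁.not_isUnit hs₂.not_isUnit hs''U ht₁.not_isUnit ht₂.not_isUnit heq with
      ⟨f, hfU, hf1, hf2⟩ | ⟨f, hfU, hf1, hf2⟩
    · have hdvd : t₁ ∣ s₁ * s₂ := ZP.dvd_of_common ht₁ hfU hf2 hf1
      obtain ⟨g, hgirr, hg⟩ := ZP.cofactor_irreducible hZ hs₁ hs₂ ht₁ hdvd
      have ht₂eq : t₂ = g * s''.prod := by
        apply mul_left_cancel₀ ht₁.ne_zero
        linear_combination -heq + s''.prod * hg
      rcases ht₂.isUnit_or_isUnit ht₂eq with h1 | h1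
      · exact absurd h1 hgirr.not_isUnit
      · exact absurd h1 hs''U
    · have hdvd : t₂ ∣ s₁ * s₂ := ZP.dvd_of_common ht₂ hfU hf2 hf1
      obtain ⟨g, hgirr, hg⟩ := ZP.cofactor_irreducible hZ hs₁ hs₂ ht₂ hdvd
      have ht₁eq : t₁ = g * s''.prod := by
        apply mul_left_cancel₀ ht₂.ne_zero
        linear_combination -heq + s''.prod * hg
      rcases ht₁.isUnit_or_isUnit ht₁eq with h1 | h1
      · exact absurd h1 hgirr.not_isUnit
      · exact absurd h1 hs''U
  · -- card t ≥ 3, card s ≥ 2 : the main inductive step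
    have htcard3 : 3 ≤ Multiset.card t := by omega
    obtain ⟨s₁, s', rfl⟩ := ZP.exists_cons hs0
    have hs'0 : s' ≠ 0 := by
      intro h; rw [h] at hscard2; simp at hscard2
    obtain ⟨t₁, t', rfl⟩ := ZP.exists_cons ht0
    have ht'0 : t' ≠ 0 := by
      intro h; rw [h] at htcard3; simp at htcard3
    obtain ⟨t₂, t'', rfl⟩ := ZP.exists_cons ht'0
    have ht''0 : t'' ≠ 0 := by
      intro h; rw [h] at htcard3; simp at htcard3
    have hs₁ : Irreducible s₁ := hs s₁ (by simp)
    have ht₁ : Irreducible t₁ := ht t₁ (by simp)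
    have ht₂ : Irreducible t₂ := ht t₂ (by simp)
    have hs'atoms : ∀ a ∈ s', Irreducible a := fun a ha => hs a (by simp [ha])
    have ht''atoms : ∀ a ∈ t'', Irreducible a := fun a ha => ht a (by simp [ha])
    have hs'U : ¬IsUnit s'.prod := ZP.prod_not_isUnit hs'atoms hs'0
    have hs'ne : s'.prod ≠ 0 := ZP.prod_ne_zero hs'atoms
    have ht''U : ¬IsUnit t''.prod := ZP.prod_not_isUnit ht''atoms ht''0
    have ht''ne : t''.prod ≠ 0 := ZP.prod_ne_zero ht''atoms
    simp only [Multiset.prod_cons] at hprod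
    have heq : t₁ * t₂ * t''.prod = s₁ * s'.prod := by rw [hprod]; ring
    have hcards' : Multiset.card s' = n - 1 := by
      simp only [Multiset.card_cons] at hcard; omega
    have hn1 : n - 1 < n := by omega
    rcases hZ t₁ t₂ t''.prod s₁ s'.prod ht₁.ne_zero ht₂.ne_zero ht''ne hs₁.ne_zero hs'ne
        ht₁.not_isUnit ht₂.not_isUnit ht''U hs₁.not_isUnit hs'U heq with
      ⟨f, hfU, hf1, hf2⟩ | ⟨f, hfU, hf1, hf2⟩
    · -- s₁ ∣ t₁ t₂
      have hdvd : s₁ ∣ t₁ * t₂ := ZP.dvd_of_common hs₁ hfU hf2 hf1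
      obtain ⟨g, hgirr, hg⟩ := ZP.cofactor_irreducible hZ ht₁ ht₂ hs₁ hdvd
      have hkey : s'.prod = (g ::ₘ t'').prod := by
        rw [Multiset.prod_cons]
        apply mul_left_cancel₀ hs₁.ne_zero
        linear_combination -heq + t''.prod * hg
      have := IH (n-1) hn1 s' (g ::ₘ t'') hcards' hs'atoms
        (fun a ha => by
          rcases Multiset.mem_cons.1 ha with rfl | ha'
          · exact hgirr
          · exact ht''atoms a ha') hkey
      simp only [Multiset.card_cons] at *
      omega
    · -- f ∣ s'.prod : extract an atom π of f
      have hf0 : f ≠ 0 := by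
        rintro rfl
        rw [zero_dvd_iff] at hf1
        exact (mul_ne_zero ht₁.ne_zero ht₂.ne_zero) hf1
      obtain ⟨u, huatoms, huprod⟩ := hAtomic f hf0 hfU
      have hu0 : u ≠ 0 := by
        rintro rfl
        rw [Multiset.prod_zero] at huprod
        exact hfU (huprod ▸ isUnit_one)
      obtain ⟨π, hπmem⟩ := Multiset.exists_mem_of_ne_zero hu0
      have hπ : Irreducible π := huatoms π hπmem
      have hπf : π ∣ f := huprod ▸ Multiset.dvd_prod hπmem
      have hπt : π ∣ t₁ * t₂ := hπf.trans hf1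
      have hπs : π ∣ s'.prod := hπf.trans hf2
      obtain ⟨g, hgirr, hg⟩ := ZP.cofactor_irreducible hZ ht₁ ht₂ hπ hπt
      obtain ⟨h, hh⟩ := hπs
      have hkey : s₁ * h = g * t''.prod := by
        apply mul_left_cancel₀ hπ.ne_zero
        linear_combination -s₁ * hh - heq + t''.prod * hg
      by_cases hhU : IsUnit h
      · -- then s' has one element and g * t''.prod is irreducible : contradiction
        have : Multiset.card (g ::ₘ t'') = 1 := by
          apply ZP.card_eq_one_of_irreducible ((irreducible_mul_isUnit hhU).2 hs₁)
            (fun a ha => by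
              rcases Multiset.mem_cons.1 ha with rfl | ha'
              · exact hgirr
              · exact ht''atoms a ha')
          rw [Multiset.prod_cons, hkey]
        simp only [Multiset.card_cons] at this
        have := Multiset.card_eq_zero.1 (by omega : Multiset.card t'' = 0)
        exact absurd this ht''0
      · have hh0 : h ≠ 0 := by
          rintro rfl; rw [mul_zero] at hh; exact hs'ne hh
        obtain ⟨w, hwatoms, hwprod⟩ := hAtomic h hh0 hhU
        have hπwatoms : ∀ a ∈ (π ::ₘ w), Irreducible a := fun a ha => by
          rcases Multiset.mem_cons.1 ha with rfl | ha'
          · exact hπ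
          · exact hwatoms a ha'
        have h1 := IH (n-1) hn1 s' (π ::ₘ w) hcards' hs'atoms hπwatoms
          (by rw [Multiset.prod_cons, hwprod, hh])
        have hcardsw : Multiset.card (s₁ ::ₘ w) = n - 1 := by
          simp only [Multiset.card_cons] at *
          omega
        have h2 := IH (n-1) hn1 (s₁ ::ₘ w) (g ::ₘ t'') hcardsw
          (fun a ha => by
            rcases Multiset.mem_cons.1 ha with rfl | ha'
            · exact hs₁
            · exact hwatoms a ha')
          (fun a ha => by
            rcases Multiset.mem_cons.1 ha with rfl | ha'
            · exact hgirr
            · exact ht''atoms a ha')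
          (by rw [Multiset.prod_cons, Multiset.prod_cons, hwprod, hkey])
        simp only [Multiset.card_cons] at *
        omega

end Multisets

section Main

variable {R : Type*} [CommRing R] [IsDomain R] {K : Type*} [Field K]
    [Algebra R K] [IsFractionRing R K]

lemma ZP.hfd_to_z (hAtomic : IsAtomicDomain R)
    (hC : ∀ a₀ a₁ : R, (∀ r : R, r ∣ a₀ → r ∣ a₁ → IsUnit r) →
      ∃ α : R, Irreducible α ∧
        algebraMap R K α ∈ vIdeal K (Ideal.span {a₀, a₁}))
    (hHFD : IsHFD R) : HasZProperty R := by
  obtain ⟨hAt, hLen⟩ := hHFD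
  intro a b c d e ha0 hb0 hc0 hd0 he0 haU hbU hcU hdU heU habc
  by_contra hcon
  push_neg at hcon
  obtain ⟨h1, h2⟩ := hcon
  have hab0 : a * b ≠ 0 := mul_ne_zero ha0 hb0
  have cop1 : ∀ r : R, r ∣ a * b → r ∣ d → IsUnit r := by
    intro r hr1 hr2
    by_contra hrU
    exact (h1 r hrU hr1) hr2
  have cop2 : ∀ r : R, r ∣ a * b → r ∣ e → IsUnit r := by
    intro r hr1 hr2
    by_contra hrU
    exact (h2 r hrU hr1) hr2
  obtain ⟨α, hαirr, hαmem⟩ := hC (a * b) d cop1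
  obtain ⟨β, hβirr, hβmem⟩ := hC (a * b) e cop2
  have hab_mem_d : a * b ∈ Ideal.span {a * b, d} :=
    Ideal.subset_span (Set.mem_insert _ _)
  have hab_mem_e : a * b ∈ Ideal.span {a * b, e} :=
    Ideal.subset_span (Set.mem_insert _ _)
  have hId : ((Ideal.span {a * b, d} : Ideal R) :
      FractionalIdeal (nonZeroDivisors R) K) ≠ 0 :=
    coeIdeal_ne_zero_of_mem hab0 hab_mem_d
  have hIe : ((Ideal.span {a * b, e} : Ideal R) :
      FractionalIdeal (nonZeroDivisors R) K) ≠ 0 :=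
    coeIdeal_ne_zero_of_mem hab0 hab_mem_e
  -- a * b divides α * β
  have hprodmem : algebraMap R K (α * β) ∈
      vIdeal K (Ideal.span {a * b, d} * Ideal.span {a * b, e}) := by
    rw [map_mul]
    exact mul_mem_vIdeal_mul hId hIe hαmem hβmem
  have hIprod : ((Ideal.span {a * b, d} * Ideal.span {a * b, e} : Ideal R) :
      FractionalIdeal (nonZeroDivisors R) K) ≠ 0 :=
    coeIdeal_ne_zero_of_mem (mul_ne_zero hab0 hab0)
      (Ideal.mul_mem_mul hab_mem_d hab_mem_e)
  have hle : Ideal.span {a * b, d} * Ideal.span {a * b, e} ≤ Ideal.span {a * b} := by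
    rw [Ideal.mul_le]
    intro r hr s hs
    obtain ⟨u, v, hr⟩ := Ideal.mem_span_pair.1 hr
    obtain ⟨u', v', hs⟩ := Ideal.mem_span_pair.1 hs
    rw [Ideal.mem_span_singleton]
    refine ⟨u * u' * (a * b) + u * v' * e + v * u' * d + v * v' * c, ?_⟩
    rw [← hr, ← hs]
    linear_combination (-(v * v')) * habc
  have hab_dvd : a * b ∣ α * β :=
    dvd_of_mem_vIdeal_span_singleton hab0
      (vIdeal_mono hIprod hle hprodmem)
  obtain ⟨u, hu⟩ := hab_dvd
  have hαβ0 : α * β ≠ 0 := mul_ne_zero hαirr.ne_zero hβirr.ne_zero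
  have hu0 : u ≠ 0 := by rintro rfl; rw [mul_zero] at hu; exact hαβ0 hu
  have huU : IsUnit u := by
    by_contra huU
    obtain ⟨sa, hsa, hsaprod⟩ := hAt a ha0 haU
    obtain ⟨sb, hsb, hsbprod⟩ := hAt b hb0 hbU
    obtain ⟨su, hsu, hsuprod⟩ := hAt u hu0 huU
    have hsa0 : sa ≠ 0 := by
      rintro rfl; rw [Multiset.prod_zero] at hsaprod; exact haU (hsaprod ▸ isUnit_one)
    have hsb0 : sb ≠ 0 := by
      rintro rfl; rw [Multiset.prod_zero] at hsbprod; exact hbU (hsbprod ▸ isUnit_one)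
    have hsu0 : su ≠ 0 := by
      rintro rfl; rw [Multiset.prod_zero] at hsuprod; exact huU (hsuprod ▸ isUnit_one)
    have hcards := hLen (α ::ₘ β ::ₘ 0) (sa + sb + su)
      (fun x hx => by
        rcases Multiset.mem_cons.1 hx with rfl | hx'
        · exact hαirr
        · rcases Multiset.mem_cons.1 hx' with rfl | hx''
          · exact hβirr
          · simp at hx'')
      (fun x hx => by
        rcases Multiset.mem_add.1 hx with hx' | hx'
        · rcases Multiset.mem_add.1 hx' with hx'' | hx''
          · exact hsa x hx''
          · exact hsb x hx''
        · exact hsu x hx')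
      (by
        simp only [Multiset.prod_cons, Multiset.prod_zero, Multiset.prod_add,
          hsaprod, hsbprod, hsuprod, mul_one]
        rw [hu])
    simp only [Multiset.card_cons, Multiset.card_zero, Multiset.card_add] at hcards
    have hca : 1 ≤ Multiset.card sa := Multiset.card_pos.2 hsa0
    have hcb : 1 ≤ Multiset.card sb := Multiset.card_pos.2 hsb0
    have hcu : 1 ≤ Multiset.card su := Multiset.card_pos.2 hsu0
    omega
  obtain ⟨U, hUval⟩ := huU
  have hβab : β ∣ a * b := by
    refine ⟨α * ↑U⁻¹, ?_⟩
    have hUmul : (↑U : R) * ↑U⁻¹ = 1 := U.mul_inv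
    rw [← hUval] at hu
    linear_combination (-(↑U⁻¹ : R)) * hu - (a * b) * hUmul
  rw [← hUval] at hu
  -- d divides α * c
  have hc_mem : c ∈ Ideal.span {c} := Ideal.mem_span_singleton.2 dvd_rfl
  have hIc : ((Ideal.span {c} : Ideal R) : FractionalIdeal (nonZeroDivisors R) K) ≠ 0 :=
    coeIdeal_ne_zero_of_mem hc0 hc_mem
  have hαc_mem : algebraMap R K (α * c) ∈
      vIdeal K (Ideal.span {a * b, d} * Ideal.span {c}) := by
    rw [map_mul]
    exact mul_mem_vIdeal_mul hId hIc hαmem (mem_vIdeal_of_mem hIc hc_mem)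
  have hIprod2 : ((Ideal.span {a * b, d} * Ideal.span {c} : Ideal R) :
      FractionalIdeal (nonZeroDivisors R) K) ≠ 0 :=
    coeIdeal_ne_zero_of_mem (mul_ne_zero hab0 hc0) (Ideal.mul_mem_mul hab_mem_d hc_mem)
  have hle2 : Ideal.span {a * b, d} * Ideal.span {c} ≤ Ideal.span {d} := by
    rw [Ideal.mul_le]
    intro r hr s hs
    obtain ⟨u', v', hr⟩ := Ideal.mem_span_pair.1 hr
    obtain ⟨w, hw⟩ := Ideal.mem_span_singleton.1 hs
    rw [Ideal.mem_span_singleton]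
    refine ⟨u' * e * w + v' * c * w, ?_⟩
    rw [← hr, hw]
    linear_combination (u' * w) * habc
  have hd_dvd : d ∣ α * c :=
    dvd_of_mem_vIdeal_span_singleton hd0 (vIdeal_mono hIprod2 hle2 hαc_mem)
  obtain ⟨s, hsv⟩ := hd_dvd
  have key : e * ↑U = s * β := by
    apply mul_left_cancel₀ hd0
    linear_combination β * hsv - c * hu - (↑U : R) * habc
  have hβe : β ∣ e := by
    refine ⟨s * ↑U⁻¹, ?_⟩
    have hUmul : (↑U : R) * ↑U⁻¹ = 1 := U.mul_inv
    linear_combination (↑U⁻¹ : R) * key - e * hUmul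
  exact (h2 β hβirr.not_isUnit hβab) hβe

end Main

/-- Let `R` be an atomic, integrally closed domain satisfying
condition (C): every primitive two-generated ideal `(a₀, a₁)` contains an
irreducible element in its divisorial closure. Then `R` is an HFD iff `R` has the
Z-property. -/
theorem hfd_iff_zproperty_of_conditionC (R K : Type*) [CommRing R] [IsDomain R]
    [Field K] [Algebra R K] [IsFractionRing R K]
    (hAtomic : IsAtomicDomain R) (hIC : IsIntegrallyClosed R)
    (hC : ∀ a₀ a₁ : R, (∀ r : R, r ∣ a₀ → r ∣ a₁ → IsUnit r) →
      ∃ α : R, Irreducible α ∧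
        algebraMap R K α ∈ vIdeal K (Ideal.span {a₀, a₁})) :
    IsHFD R ↔ HasZProperty R := by
  constructor
  · exact fun h => ZP.hfd_to_z hAtomic hC h
  · intro hZ
    exact ⟨hAtomic, fun s t hs ht hprod =>
      ZP.length_eq hAtomic hZ (Multiset.card s) s t rfl hs ht hprod⟩
end

section
/- Let R = ℚ[x, y, zx, zy] be the subring of the polynomial ring ℚ[x,y,z] generated over ℚ by the elements x, y, zx, zy. Then R is not a half-factorial domain. -/
open MvPolynomial in
/-- The subring `F[x, y, zx, zy]` of `F[x, y, z]`, with `x = X 0`, `y = X 1`,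
`z = X 2`. -/
noncomputable def monomialSubring (F : Type*) [Field F] :
    Subalgebra F (MvPolynomial (Fin 3) F) :=
  Algebra.adjoin F {X 0, X 1, X 2 * X 0, X 2 * X 1}

open MvPolynomial

noncomputable section AuxHFD

abbrev K : Type := MvPolynomial (Fin 3) ℚ

/-- The subalgebra of polynomials all of whose monomials `x^a y^b z^c` satisfy `c ≤ a + b`. -/
def Swt : Subalgebra ℚ K where
  carrier := {f | ∀ m ∈ f.support, m 2 ≤ m 0 + m 1}
  mul_mem' {f g} hf hg := by
    classical
    intro m hm
    have := MvPolynomial.support_mul f g hm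
    rw [Finset.mem_add] at this
    obtain ⟨a, ha, b, hb, rfl⟩ := this
    have h1 := hf a ha
    have h2 := hg b hb
    simp only [Finsupp.add_apply]
    omega
  add_mem' {f g} hf hg := by
    classical
    intro m hm
    rcases Finset.mem_union.1 (MvPolynomial.support_add hm) with h | h
    · exact hf m h
    · exact hg m h
  algebraMap_mem' r := by
    intro m hm
    have : coeff m (algebraMap ℚ K r) ≠ 0 := by simpa [MvPolynomial.mem_support_iff] using hm
    rw [MvPolynomial.algebraMap_eq, MvPolynomial.coeff_C] at this
    have : (0 : Fin 3 →₀ ℕ) = m := by by_contra h; simp [h] at this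
    simp [← this]

lemma monomialSubring_le_Swt : monomialSubring ℚ ≤ Swt := by
  rw [monomialSubring]
  apply Algebra.adjoin_le
  rintro f (rfl | rfl | rfl | rfl)
  · intro m hm
    rw [MvPolynomial.support_X, Finset.mem_singleton] at hm
    subst hm; simp [Finsupp.single_apply]
  · intro m hm
    rw [MvPolynomial.support_X, Finset.mem_singleton] at hm
    subst hm; simp [Finsupp.single_apply]
  · have hxz : (X 2 * X 0 : K) = monomial (Finsupp.single 2 1 + Finsupp.single 0 1) 1 := by
      rw [MvPolynomial.X, MvPolynomial.X, MvPolynomial.monomial_mul, one_mul]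
    intro m hm
    rw [hxz, MvPolynomial.support_monomial] at hm
    simp only [if_neg one_ne_zero, Finset.mem_singleton] at hm
    subst hm; simp [Finsupp.single_apply]
  · have hxz : (X 2 * X 1 : K) = monomial (Finsupp.single 2 1 + Finsupp.single 1 1) 1 := by
      rw [MvPolynomial.X, MvPolynomial.X, MvPolynomial.monomial_mul, one_mul]
    intro m hm
    rw [hxz, MvPolynomial.support_monomial] at hm
    simp only [if_neg one_ne_zero, Finset.mem_singleton] at hm
    subst hm; simp [Finsupp.single_apply]

/-- `p' = z⁴x² + y`. -/
def pP : K := X 2 ^ 4 * X 0 ^ 2 + X 1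

/-- `q' = zy³ + x²`. -/
def qP : K := X 2 * X 1 ^ 3 + X 0 ^ 2

lemma X0_mem : (X 0 : K) ∈ monomialSubring ℚ :=
  Algebra.subset_adjoin (by simp)

lemma X1_mem : (X 1 : K) ∈ monomialSubring ℚ :=
  Algebra.subset_adjoin (by simp)

lemma ZX_mem : (X 2 * X 0 : K) ∈ monomialSubring ℚ :=
  Algebra.subset_adjoin (by simp)

lemma ZY_mem : (X 2 * X 1 : K) ∈ monomialSubring ℚ :=
  Algebra.subset_adjoin (by simp)

lemma qP_mem : qP ∈ monomialSubring ℚ := by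
  have h : qP = (X 2 * X 1) * (X 1 * X 1) + X 0 * X 0 := by rw [qP]; ring
  rw [h]
  exact add_mem (mul_mem ZY_mem (mul_mem X1_mem X1_mem)) (mul_mem X0_mem X0_mem)

lemma A1_mem : pP * qP ∈ monomialSubring ℚ := by
  have h : pP * qP = (X 2 * X 0) ^ 2 * (X 2 * X 1) ^ 3 + (X 2 * X 0) ^ 4
      + (X 2 * X 1) * (X 1 * (X 1 * X 1)) + (X 0 * X 0) * X 1 := by
    rw [pP, qP]; ring
  rw [h]
  exact add_mem (add_mem (add_mem (mul_mem (pow_mem ZX_mem 2) (pow_mem ZY_mem 3))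
    (pow_mem ZX_mem 4)) (mul_mem ZY_mem (mul_mem X1_mem (mul_mem X1_mem X1_mem))))
    (mul_mem (mul_mem X0_mem X0_mem) X1_mem)

lemma A2_mem : pP * X 0 ^ 2 ∈ monomialSubring ℚ := by
  have h : pP * X 0 ^ 2 = (X 2 * X 0) ^ 4 + (X 0 * X 0) * X 1 := by rw [pP]; ring
  rw [h]
  exact add_mem (pow_mem ZX_mem 4) (mul_mem (mul_mem X0_mem X0_mem) X1_mem)

lemma pP_not_mem : pP ∉ monomialSubring ℚ := by
  intro h
  have hS := monomialSubring_le_Swt h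
  set m0 : Fin 3 →₀ ℕ := Finsupp.single 2 4 + Finsupp.single 0 2 with hm0
  have hsupp : m0 ∈ pP.support := by
    rw [MvPolynomial.mem_support_iff]
    have h1 : (X 2 ^ 4 * X 0 ^ 2 : K) = monomial m0 1 := by
      rw [X_pow_eq_monomial, X_pow_eq_monomial, MvPolynomial.monomial_mul, one_mul]
    have h2 : coeff m0 (X 1 : K) = 0 := by
      rw [MvPolynomial.X, MvPolynomial.coeff_monomial, if_neg]
      intro hc
      have := DFunLike.congr_fun hc 2
      simp [hm0, Finsupp.single_apply] at this
    rw [pP, MvPolynomial.coeff_add, h1, h2, MvPolynomial.coeff_monomial, if_pos rfl]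
    norm_num
  have := hS m0 hsupp
  simp [hm0, Finsupp.single_apply] at this

lemma pPX_not_mem : pP * X 0 ∉ monomialSubring ℚ := by
  intro h
  have hS := monomialSubring_le_Swt h
  set m0 : Fin 3 →₀ ℕ := Finsupp.single 2 4 + Finsupp.single 0 3 with hm0
  have hsupp : m0 ∈ (pP * X 0).support := by
    rw [MvPolynomial.mem_support_iff]
    have hexp : pP * X 0 = X 2 ^ 4 * X 0 ^ 3 + X 0 * X 1 := by rw [pP]; ring
    have h1 : (X 2 ^ 4 * X 0 ^ 3 : K) = monomial m0 1 := by
      rw [X_pow_eq_monomial, X_pow_eq_monomial, MvPolynomial.monomial_mul, one_mul]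
    have h2 : coeff m0 (X 0 * X 1 : K) = 0 := by
      have : (X 0 * X 1 : K) = monomial (Finsupp.single 0 1 + Finsupp.single 1 1) 1 := by
        rw [MvPolynomial.X, MvPolynomial.X, MvPolynomial.monomial_mul, one_mul]
      rw [this, MvPolynomial.coeff_monomial, if_neg]
      intro hc
      have := DFunLike.congr_fun hc 2
      simp [hm0, Finsupp.single_apply] at this
    rw [hexp, MvPolynomial.coeff_add, h1, h2, MvPolynomial.coeff_monomial, if_pos rfl]
    norm_num
  have := hS m0 hsupp
  simp [hm0, Finsupp.single_apply] at this
lemma exists_C_of_isUnit : ∀ (n : ℕ) (f : MvPolynomial (Fin n) ℚ), IsUnit f →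
    ∃ c : ℚ, f = C c := by
  intro n
  induction n with
  | zero => intro f _; exact ⟨coeff 0 f, MvPolynomial.eq_C_of_isEmpty f⟩
  | succ n ih =>
    intro f hf
    let e := MvPolynomial.finSuccEquiv ℚ n
    have hef : IsUnit (e f) := hf.map e
    obtain ⟨r, hr, hCr⟩ := Polynomial.isUnit_iff.1 hef
    obtain ⟨c, rfl⟩ := ih r hr
    refine ⟨c, ?_⟩
    have hC : e (C c) = Polynomial.C (C c) := by
      simp [e, MvPolynomial.finSuccEquiv_apply, MvPolynomial.eval₂Hom_C]
    apply e.injective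
    rw [hC, hCr.symm]

lemma prime_X_mvq {n : ℕ} (i : Fin (n + 1)) :
    Prime (X i : MvPolynomial (Fin (n + 1)) ℚ) := by
  let E := (MvPolynomial.renameEquiv ℚ (Equiv.swap i 0)).trans (MvPolynomial.finSuccEquiv ℚ n)
  have h : E (X i) = Polynomial.X := by
    simp [E, MvPolynomial.renameEquiv_apply, MvPolynomial.rename_X, Equiv.swap_apply_left,
      MvPolynomial.finSuccEquiv_X_zero]
  have := (MulEquiv.prime_iff (p := (X i : MvPolynomial (Fin (n + 1)) ℚ)) E.toMulEquiv)
  rw [show E.toMulEquiv (X i) = E (X i) from rfl, h] at this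
  exact this.1 Polynomial.prime_X

lemma irreducible_linear {D : Type} [CommRing D] [IsDomain D] (a b : D) (ha : a ≠ 0)
    (h : ∀ d : D, d ∣ a → d ∣ b → IsUnit d) :
    Irreducible (Polynomial.C a * Polynomial.X + Polynomial.C b) := by
  set P := Polynomial.C a * Polynomial.X + Polynomial.C b with hP
  have hdeg : P.natDegree = 1 := Polynomial.natDegree_linear ha
  have hPne : P ≠ 0 := fun h0 => by simp [h0] at hdeg
  constructor
  · intro hu
    have := Polynomial.degree_eq_zero_of_isUnit hu
    rw [Polynomial.degree_eq_natDegree hPne, hdeg] at this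
    simp at this
  · intro g k hgk
    have hgne : g ≠ 0 := fun h0 => hPne (by rw [hgk, h0, zero_mul])
    have hkne : k ≠ 0 := fun h0 => hPne (by rw [hgk, h0, mul_zero])
    have hsum : g.natDegree + k.natDegree = 1 := by
      rw [← Polynomial.natDegree_mul hgne hkne, ← hgk, hdeg]
    have hco1 : P.coeff 1 = a := by simp [hP]
    have hco0 : P.coeff 0 = b := by simp [hP]
    rcases Nat.eq_zero_or_pos g.natDegree with hg0 | hgpos
    · left
      obtain ⟨u, hu⟩ := Polynomial.natDegree_eq_zero.1 hg0
      have hua : u ∣ a := by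
        refine ⟨k.coeff 1, ?_⟩
        rw [← hco1, hgk, ← hu, Polynomial.coeff_C_mul]
      have hub : u ∣ b := by
        refine ⟨k.coeff 0, ?_⟩
        rw [← hco0, hgk, ← hu, Polynomial.coeff_C_mul]
      rw [← hu]
      exact (Polynomial.isUnit_C).2 (h u hua hub)
    · right
      have hk0 : k.natDegree = 0 := by omega
      obtain ⟨u, hu⟩ := Polynomial.natDegree_eq_zero.1 hk0
      have hua : u ∣ a := by
        refine ⟨g.coeff 1, ?_⟩
        rw [← hco1, hgk, ← hu, mul_comm, Polynomial.coeff_C_mul]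
      have hub : u ∣ b := by
        refine ⟨g.coeff 0, ?_⟩
        rw [← hco0, hgk, ← hu, mul_comm, Polynomial.coeff_C_mul]
      rw [← hu]
      exact (Polynomial.isUnit_C).2 (h u hua hub)
lemma fin1_succ : (1 : Fin 3) = Fin.succ (0 : Fin 2) := rfl
lemma fin2_succ : (2 : Fin 3) = Fin.succ (1 : Fin 2) := rfl

lemma fse_X1 : (MvPolynomial.finSuccEquiv ℚ 2) (X 1 : K) = Polynomial.C (X 0) := by
  rw [fin1_succ, MvPolynomial.finSuccEquiv_X_succ]
lemma fse_X2 : (MvPolynomial.finSuccEquiv ℚ 2) (X 2 : K) = Polynomial.C (X 1) := by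
  rw [fin2_succ, MvPolynomial.finSuccEquiv_X_succ]

lemma pP_irred : Irreducible pP := by
  let E := (MvPolynomial.renameEquiv ℚ (Equiv.swap (0 : Fin 3) 1)).trans
    (MvPolynomial.finSuccEquiv ℚ 2)
  have e0 : E (X 0) = Polynomial.C (X 0) := by
    simp [E, MvPolynomial.rename_X, Equiv.swap_apply_left, fse_X1]
  have e1 : E (X 1) = Polynomial.X := by
    simp [E, MvPolynomial.rename_X, Equiv.swap_apply_right, MvPolynomial.finSuccEquiv_X_zero]
  have e2 : E (X 2) = Polynomial.C (X 1) := by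
    have hs : Equiv.swap (0 : Fin 3) 1 2 = 2 :=
      Equiv.swap_apply_of_ne_of_ne (by decide) (by decide)
    simp [E, MvPolynomial.rename_X, hs, fse_X2]
  have hE : E pP = Polynomial.C (1 : MvPolynomial (Fin 2) ℚ) * Polynomial.X
      + Polynomial.C (X 1 ^ 4 * X 0 ^ 2) := by
    rw [pP, map_add, map_mul, map_pow, map_pow, e0, e1, e2]
    simp only [← Polynomial.C_pow, ← Polynomial.C_mul, map_one]
    ring
  have hirr : Irreducible (E pP) := by
    rw [hE]
    exact irreducible_linear _ _ one_ne_zero (fun d hd _ => isUnit_of_dvd_one hd)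
  exact (MulEquiv.irreducible_iff E.toMulEquiv).1 hirr

lemma coprime_X0_X1_pow {i j : ℕ} (d : MvPolynomial (Fin 2) ℚ)
    (hd0 : d ∣ X 0 ^ i) (hd1 : d ∣ X 1 ^ j) : IsUnit d := by
  obtain ⟨k, hk, hass⟩ := (dvd_prime_pow (prime_X_mvq (0 : Fin 2)) i).1 hd0
  rcases Nat.eq_zero_or_pos k with rfl | hkpos
  · exact associated_one_iff_isUnit.1 (by simpa using hass)
  · exfalso
    have hX0d : (X 0 : MvPolynomial (Fin 2) ℚ) ∣ d :=
      (dvd_pow_self (X 0 : MvPolynomial (Fin 2) ℚ) hkpos.ne').trans hass.symm.dvd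
    have hX01 : (X 0 : MvPolynomial (Fin 2) ℚ) ∣ X 1 :=
      (prime_X_mvq (0 : Fin 2)).dvd_of_dvd_pow (hX0d.trans hd1)
    have := map_dvd (MvPolynomial.eval (fun j : Fin 2 => if j = 0 then (0 : ℚ) else 1)) hX01
    simp at this

lemma qP_irred : Irreducible qP := by
  let E := (MvPolynomial.renameEquiv ℚ (Equiv.swap (0 : Fin 3) 2)).trans
    (MvPolynomial.finSuccEquiv ℚ 2)
  have e0 : E (X 0) = Polynomial.C (X 1) := by
    simp [E, MvPolynomial.rename_X, Equiv.swap_apply_left, fse_X2]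
  have e2 : E (X 2) = Polynomial.X := by
    simp [E, MvPolynomial.rename_X, Equiv.swap_apply_right, MvPolynomial.finSuccEquiv_X_zero]
  have e1 : E (X 1) = Polynomial.C (X 0) := by
    have hs : Equiv.swap (0 : Fin 3) 2 1 = 1 :=
      Equiv.swap_apply_of_ne_of_ne (by decide) (by decide)
    simp [E, MvPolynomial.rename_X, hs, fse_X1]
  have hE : E qP = Polynomial.C ((X 0 : MvPolynomial (Fin 2) ℚ) ^ 3) * Polynomial.X
      + Polynomial.C (X 1 ^ 2) := by
    rw [qP, map_add, map_mul, map_pow, map_pow, e0, e1, e2]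
    simp only [← Polynomial.C_pow, ← Polynomial.C_mul]
    ring
  have hirr : Irreducible (E qP) := by
    rw [hE]
    exact irreducible_linear _ _ (pow_ne_zero _ (MvPolynomial.X_ne_zero 0))
      (fun d hd0 hd1 => coprime_X0_X1_pow d hd0 hd1)
  exact (MulEquiv.irreducible_iff E.toMulEquiv).1 hirr
lemma constant_of_unit (t : K) (hu : IsUnit t) : ∃ c : ℚ, c ≠ 0 ∧ t = C c := by
  obtain ⟨c, rfl⟩ := exists_C_of_isUnit 3 t hu
  refine ⟨c, ?_, rfl⟩
  rintro rfl
  simp only [map_zero] at hu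
  exact not_isUnit_zero hu

lemma C_mem (c : ℚ) : (C c : K) ∈ monomialSubring ℚ := by
  have := (monomialSubring ℚ).algebraMap_mem c
  rwa [MvPolynomial.algebraMap_eq] at this

lemma isUnit_lift {f : K} (hf : f ∈ monomialSubring ℚ) (hu : IsUnit f) :
    IsUnit (⟨f, hf⟩ : monomialSubring ℚ) := by
  obtain ⟨c, hc, rfl⟩ := constant_of_unit f hu
  refine IsUnit.of_mul_eq_one ⟨C c⁻¹, C_mem c⁻¹⟩ ?_
  apply Subtype.ext
  show (C c * C c⁻¹ : K) = 1
  rw [← MvPolynomial.C_mul, mul_inv_cancel₀ hc, MvPolynomial.C_1]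

lemma isUnit_down {g : monomialSubring ℚ} (hu : IsUnit g) : IsUnit (g : K) :=
  hu.map (Subalgebra.val _)

lemma pP_prime : Prime pP := (UniqueFactorizationMonoid.irreducible_iff_prime).1 pP_irred

lemma pP_ne : pP ≠ 0 := pP_prime.ne_zero

lemma helper1 (g h : K) (hg : g ∈ monomialSubring ℚ) (hco : pP * qP = g * h)
    (hdvd : pP ∣ g) : IsUnit h := by
  obtain ⟨t, rfl⟩ := hdvd
  rw [mul_assoc] at hco
  have hq : qP = t * h := mul_left_cancel₀ pP_ne hco
  rcases qP_irred.isUnit_or_isUnit hq with hu | hu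
  · exfalso
    obtain ⟨c, hc, rfl⟩ := constant_of_unit t hu
    have : pP = (pP * C c) * C c⁻¹ := by
      rw [mul_assoc, ← MvPolynomial.C_mul, mul_inv_cancel₀ hc, MvPolynomial.C_1, mul_one]
    exact pP_not_mem (this ▸ mul_mem hg (C_mem c⁻¹))
  · exact hu

lemma helper2 (g h : K) (hg : g ∈ monomialSubring ℚ) (hco : pP * X 0 ^ 2 = g * h)
    (hdvd : pP ∣ g) : IsUnit h := by
  obtain ⟨t, rfl⟩ := hdvd
  rw [mul_assoc] at hco
  have hq : (X 0 : K) ^ 2 = t * h := mul_left_cancel₀ pP_ne hco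
  have htd : t ∣ (X 0 : K) ^ 2 := ⟨h, hq⟩
  obtain ⟨i, hi, u, hu⟩ := (dvd_prime_pow (prime_X_mvq (0 : Fin 3)) 2).1 htd
  obtain ⟨c, hc, hcu⟩ := constant_of_unit (u : K) u.isUnit
  interval_cases i
  · exfalso
    have htu : IsUnit t := IsUnit.of_mul_eq_one _ (by simpa using hu)
    obtain ⟨c', hc', rfl⟩ := constant_of_unit t htu
    have : pP = (pP * C c') * C c'⁻¹ := by
      rw [mul_assoc, ← MvPolynomial.C_mul, mul_inv_cancel₀ hc', MvPolynomial.C_1, mul_one]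
    exact pP_not_mem (this ▸ mul_mem hg (C_mem c'⁻¹))
  · exfalso
    have h1 : pP * X 0 = (pP * t) * (C c) := by
      rw [← hcu, mul_assoc, hu, pow_one]
    apply pPX_not_mem
    rw [h1]
    exact mul_mem hg (C_mem c)
  · -- t * u = X 0 ^ 2 = t * h, so h = u is a unit
    have htne : t ≠ 0 := by
      rintro rfl
      rw [zero_mul] at hu
      exact (pow_ne_zero 2 (MvPolynomial.X_ne_zero (0 : Fin 3))) hu.symm
    have : h = (u : K) := by
      apply mul_left_cancel₀ htne
      rw [← hq, hu]
    rw [this]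
    exact u.isUnit
def xR : monomialSubring ℚ := ⟨X 0, X0_mem⟩
def qR : monomialSubring ℚ := ⟨qP, qP_mem⟩
def a1 : monomialSubring ℚ := ⟨pP * qP, A1_mem⟩
def a2 : monomialSubring ℚ := ⟨pP * X 0 ^ 2, A2_mem⟩

lemma coe_eq {g h : monomialSubring ℚ} (hco : g = h) : (g : K) = (h : K) :=
  congrArg Subtype.val hco

lemma irred_xR : Irreducible xR := by
  constructor
  · intro hu
    exact (prime_X_mvq (0 : Fin 3)).not_unit (isUnit_down hu)
  · intro g h heq
    have hco : (X 0 : K) = (g : K) * (h : K) := by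
      simpa [xR, MulMemClass.coe_mul] using coe_eq heq
    rcases (prime_X_mvq (0 : Fin 3)).irreducible.isUnit_or_isUnit hco with hu | hu
    · exact Or.inl (isUnit_lift g.2 hu)
    · exact Or.inr (isUnit_lift h.2 hu)

lemma irred_qR : Irreducible qR := by
  constructor
  · intro hu
    exact qP_irred.not_isUnit (isUnit_down hu)
  · intro g h heq
    have hco : qP = (g : K) * (h : K) := by
      simpa [qR, MulMemClass.coe_mul] using coe_eq heq
    rcases qP_irred.isUnit_or_isUnit hco with hu | hu
    · exact Or.inl (isUnit_lift g.2 hu)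
    · exact Or.inr (isUnit_lift h.2 hu)

lemma irred_a1 : Irreducible a1 := by
  constructor
  · intro hu
    exact pP_irred.not_isUnit (isUnit_of_mul_isUnit_left (isUnit_down hu))
  · intro g h heq
    have hco : pP * qP = (g : K) * (h : K) := by
      simpa [a1, MulMemClass.coe_mul] using coe_eq heq
    rcases pP_prime.2.2 (g : K) (h : K) ⟨qP, hco.symm⟩ with hd | hd
    · exact Or.inr (isUnit_lift h.2 (helper1 _ _ g.2 hco hd))
    · exact Or.inl (isUnit_lift g.2 (helper1 _ _ h.2 (by rw [hco]; ring) hd))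

lemma irred_a2 : Irreducible a2 := by
  constructor
  · intro hu
    exact pP_irred.not_isUnit (isUnit_of_mul_isUnit_left (isUnit_down hu))
  · intro g h heq
    have hco : pP * X 0 ^ 2 = (g : K) * (h : K) := by
      simpa [a2, MulMemClass.coe_mul] using coe_eq heq
    rcases pP_prime.2.2 (g : K) (h : K) ⟨X 0 ^ 2, hco.symm⟩ with hd | hd
    · exact Or.inr (isUnit_lift h.2 (helper2 _ _ g.2 hco hd))
    · exact Or.inl (isUnit_lift g.2 (helper2 _ _ h.2 (by rw [hco]; ring) hd))

end AuxHFD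


/-- The Krull domain `ℚ[x, y, zx, zy]` is not a half-factorial
domain. -/
theorem monomialSubring_rat_not_hfd : ¬ IsHFD (monomialSubring ℚ) := by
  rintro ⟨-, H⟩
  have h3 := H {a1, xR, xR} {a2, qR}
    (by
      intro a ha
      simp only [Multiset.insert_eq_cons, Multiset.mem_cons, Multiset.mem_singleton] at ha
      rcases ha with rfl | rfl | rfl
      · exact irred_a1
      · exact irred_xR
      · exact irred_xR)
    (by
      intro a ha
      simp only [Multiset.insert_eq_cons, Multiset.mem_cons, Multiset.mem_singleton] at ha
      rcases ha with rfl | rfl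
      · exact irred_a2
      · exact irred_qR)
    (by
      simp only [Multiset.insert_eq_cons, Multiset.prod_cons, Multiset.prod_singleton]
      apply Subtype.ext
      show (pP * qP) * (X 0 * X 0) = (pP * X 0 ^ 2) * qP
      ring)
  simp at h3
end

section
/- Let R be a Krull domain with the Z-property. If x is a nonunit of R such that xⁿ factors uniquely for some integer n > 1, then the principal ideal (xⁿ) is a finite product of principal symbolic powers of height-one prime ideals. -/
/-- A prime ideal of height one: a nonzero prime all of whose proper prime
subideals are zero. -/
def IsHeightOnePrime {R : Type*} [CommRing R] (P : Ideal R) : Prop :=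
  P.IsPrime ∧ P ≠ ⊥ ∧ ∀ Q : Ideal R, Q.IsPrime → Q < P → Q = ⊥

/-- A **Krull domain**: the localization at every height-one prime is a discrete
valuation ring, `R` is the intersection of its localizations at height-one primes
(inside its quotient field), and every nonzero element lies in only finitely many
height-one primes. -/
def IsKrullDomain (R : Type*) [CommRing R] [IsDomain R] : Prop :=
  (∀ (P : Ideal R) (hP : IsHeightOnePrime P),
      letI := hP.1
      IsDiscreteValuationRing (Localization.AtPrime P)) ∧
  (∀ x : FractionRing R,
      (∀ P : Ideal R, IsHeightOnePrime P →
        ∃ a b : R, b ∉ P ∧ x * algebraMap R (FractionRing R) b = algebraMap R (FractionRing R) a) →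
      ∃ r : R, algebraMap R (FractionRing R) r = x) ∧
  (∀ r : R, r ≠ 0 → {P : Ideal R | IsHeightOnePrime P ∧ r ∈ P}.Finite)

/-- A nonzero nonunit `x` **factors uniquely** if any two factorizations of `x`
into irreducibles agree up to order and associates. -/
def FactorsUniquely {R : Type*} [CommRing R] (x : R) : Prop :=
  x ≠ 0 ∧ ¬IsUnit x ∧
    ∀ s t : Multiset R, (∀ a ∈ s, Irreducible a) → (∀ a ∈ t, Irreducible a) →
      s.prod = x → t.prod = x → Multiset.Rel Associated s t

/-- The `k`-th symbolic power `P⁽ᵏ⁾ = PᵏR_P ∩ R` of a prime ideal `P`. -/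
noncomputable def symbolicPower {R : Type*} [CommRing R] (P : Ideal R)
    (hP : P.IsPrime) (k : ℕ) : Ideal R :=
  letI := hP
  Ideal.comap (algebraMap R (Localization.AtPrime P))
    (Ideal.map (algebraMap R (Localization.AtPrime P)) (P ^ k))

section KrullAux

variable {R : Type*} [CommRing R] [IsDomain R]

open scoped Classical in
/-- The valuation of `y` at a height-one prime `P` (junk value `0` otherwise). -/
noncomputable def vval (hK : IsKrullDomain R) (P : Ideal R) (y : R) : ℕ :=
  if h : IsHeightOnePrime P then
    letI := h.1
    letI : IsDiscreteValuationRing (Localization.AtPrime P) := hK.1 P h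
    (IsDiscreteValuationRing.addVal (Localization.AtPrime P)
      (algebraMap R (Localization.AtPrime P) y)).toNat
  else 0

theorem vval_coe (hK : IsKrullDomain R) {P : Ideal R} (hP : IsHeightOnePrime P) {y : R}
    (hy : y ≠ 0) :
    letI := hP.1
    letI : IsDiscreteValuationRing (Localization.AtPrime P) := hK.1 P hP
    (vval hK P y : ℕ∞) =
      IsDiscreteValuationRing.addVal (Localization.AtPrime P)
        (algebraMap R (Localization.AtPrime P) y) := by
  letI := hP.1
  letI : IsDiscreteValuationRing (Localization.AtPrime P) := hK.1 P hP
  have hy' : algebraMap R (Localization.AtPrime P) y ≠ 0 := fun h0 =>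
    hy (IsLocalization.injective (Localization.AtPrime P) P.primeCompl_le_nonZeroDivisors
      (by rw [h0, map_zero]))
  show ((vval hK P y : ℕ) : ℕ∞) = _
  rw [vval, dif_pos hP]
  exact ENat.coe_toNat (by
    rw [Ne, IsDiscreteValuationRing.addVal_eq_top_iff]
    exact hy')

theorem vval_mul (hK : IsKrullDomain R) {P : Ideal R} (hP : IsHeightOnePrime P) {y z : R}
    (hy : y ≠ 0) (hz : z ≠ 0) :
    vval hK P (y * z) = vval hK P y + vval hK P z := by
  letI := hP.1
  letI : IsDiscreteValuationRing (Localization.AtPrime P) := hK.1 P hP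
  have hc1 : (vval hK P (y * z) : ℕ∞) =
      IsDiscreteValuationRing.addVal (Localization.AtPrime P)
        (algebraMap R (Localization.AtPrime P) (y * z)) := vval_coe hK hP (mul_ne_zero hy hz)
  have hc2 : (vval hK P y : ℕ∞) =
      IsDiscreteValuationRing.addVal (Localization.AtPrime P)
        (algebraMap R (Localization.AtPrime P) y) := vval_coe hK hP hy
  have hc3 : (vval hK P z : ℕ∞) =
      IsDiscreteValuationRing.addVal (Localization.AtPrime P)
        (algebraMap R (Localization.AtPrime P) z) := vval_coe hK hP hz
  have : (vval hK P (y * z) : ℕ∞) = (vval hK P y : ℕ∞) + (vval hK P z : ℕ∞) := by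
    rw [hc1, hc2, hc3, map_mul, IsDiscreteValuationRing.addVal_mul]
  exact_mod_cast this

theorem vval_pos_iff (hK : IsKrullDomain R) {P : Ideal R} (hP : IsHeightOnePrime P) {y : R}
    (hy : y ≠ 0) : 1 ≤ vval hK P y ↔ y ∈ P := by
  letI := hP.1
  letI : IsDiscreteValuationRing (Localization.AtPrime P) := hK.1 P hP
  have hc : (vval hK P y : ℕ∞) =
      IsDiscreteValuationRing.addVal (Localization.AtPrime P)
        (algebraMap R (Localization.AtPrime P) y) := vval_coe hK hP hy
  obtain ⟨ϖ, hϖ⟩ := IsDiscreteValuationRing.exists_irreducible (Localization.AtPrime P)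
  have hmm : algebraMap R (Localization.AtPrime P) y ∈
      IsLocalRing.maximalIdeal (Localization.AtPrime P) ↔ y ∈ P :=
    IsLocalization.AtPrime.to_map_mem_maximal_iff (Localization.AtPrime P) P y
  rw [← hmm, hϖ.maximalIdeal_eq, Ideal.mem_span_singleton,
    ← IsDiscreteValuationRing.addVal_le_iff_dvd, IsDiscreteValuationRing.addVal_uniformizer hϖ, ← hc]
  exact_mod_cast Iff.rfl

theorem vval_eq_zero_of_not_mem (hK : IsKrullDomain R) {P : Ideal R}
    (hP : IsHeightOnePrime P) {y : R} (hy : y ≠ 0) (h : y ∉ P) : vval hK P y = 0 := by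
  by_contra h0
  exact h ((vval_pos_iff hK hP hy).1 (by omega))

theorem vval_one (hK : IsKrullDomain R) {P : Ideal R} (hP : IsHeightOnePrime P) :
    vval hK P 1 = 0 :=
  vval_eq_zero_of_not_mem hK hP one_ne_zero ((Ideal.ne_top_iff_one P).1 hP.1.ne_top)

theorem vval_pow (hK : IsKrullDomain R) {P : Ideal R} (hP : IsHeightOnePrime P) {y : R}
    (hy : y ≠ 0) (k : ℕ) : vval hK P (y ^ k) = k * vval hK P y := by
  induction k with
  | zero => simpa using vval_one hK hP
  | succ k ih =>
    rw [pow_succ, vval_mul hK hP (pow_ne_zero _ hy) hy, ih]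
    ring

theorem vval_le_of_dvd (hK : IsKrullDomain R) {P : Ideal R} (hP : IsHeightOnePrime P)
    {y z : R} (hz : z ≠ 0) (h : y ∣ z) : vval hK P y ≤ vval hK P z := by
  obtain ⟨t, rfl⟩ := h
  have hy : y ≠ 0 := fun h0 => hz (by rw [h0, zero_mul])
  have ht : t ≠ 0 := fun h0 => hz (by rw [h0, mul_zero])
  rw [vval_mul hK hP hy ht]
  exact Nat.le_add_right _ _

theorem mem_symbolicPower_iff (hK : IsKrullDomain R) {P : Ideal R} (hP : IsHeightOnePrime P)
    (k : ℕ) (y : R) :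
    y ∈ symbolicPower P hP.1 k ↔ (y = 0 ∨ k ≤ vval hK P y) := by
  letI := hP.1
  letI : IsDiscreteValuationRing (Localization.AtPrime P) := hK.1 P hP
  obtain ⟨ϖ, hϖ⟩ := IsDiscreteValuationRing.exists_irreducible (Localization.AtPrime P)
  have hmap : Ideal.map (algebraMap R (Localization.AtPrime P)) P =
      IsLocalRing.maximalIdeal (Localization.AtPrime P) :=
    Localization.AtPrime.map_eq_maximalIdeal
  have h1 : y ∈ symbolicPower P hP.1 k ↔ (k : ℕ∞) ≤
      IsDiscreteValuationRing.addVal (Localization.AtPrime P)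
        (algebraMap R (Localization.AtPrime P) y) := by
    show y ∈ Ideal.comap (algebraMap R (Localization.AtPrime P))
      (Ideal.map (algebraMap R (Localization.AtPrime P)) (P ^ k)) ↔ _
    rw [Ideal.mem_comap, Ideal.map_pow, hmap, hϖ.maximalIdeal_eq, Ideal.span_singleton_pow,
      Ideal.mem_span_singleton, ← IsDiscreteValuationRing.addVal_le_iff_dvd, hϖ.addVal_pow]
  rcases eq_or_ne y 0 with rfl | hy
  · exact iff_of_true (h1.mpr (by simp [IsDiscreteValuationRing.addVal_zero])) (Or.inl rfl)
  · have hc : (vval hK P y : ℕ∞) =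
        IsDiscreteValuationRing.addVal (Localization.AtPrime P)
          (algebraMap R (Localization.AtPrime P) y) := vval_coe hK hP hy
    rw [h1, ← hc, Nat.cast_le]
    simp [hy]

theorem dvd_of_vval_le (hK : IsKrullDomain R) {y z : R} (hy : y ≠ 0) (hz : z ≠ 0)
    (h : ∀ P : Ideal R, IsHeightOnePrime P → vval hK P y ≤ vval hK P z) : y ∣ z := by
  have hfy : algebraMap R (FractionRing R) y ≠ 0 := by
    rw [Ne, IsFractionRing.to_map_eq_zero_iff]
    exact hy
  have hloc : ∀ P : Ideal R, IsHeightOnePrime P → ∃ a b : R, b ∉ P ∧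
      (algebraMap R (FractionRing R) z / algebraMap R (FractionRing R) y) *
        algebraMap R (FractionRing R) b = algebraMap R (FractionRing R) a := by
    intro P hP
    letI := hP.1
    letI : IsDiscreteValuationRing (Localization.AtPrime P) := hK.1 P hP
    have hinj : Function.Injective (algebraMap R (Localization.AtPrime P)) :=
      IsLocalization.injective _ P.primeCompl_le_nonZeroDivisors
    have hy' : algebraMap R (Localization.AtPrime P) y ≠ 0 := fun h0 =>
      hy (hinj (by rw [h0, map_zero]))
    have hcy : (vval hK P y : ℕ∞) =
        IsDiscreteValuationRing.addVal (Localization.AtPrime P)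
          (algebraMap R (Localization.AtPrime P) y) := vval_coe hK hP hy
    have hcz : (vval hK P z : ℕ∞) =
        IsDiscreteValuationRing.addVal (Localization.AtPrime P)
          (algebraMap R (Localization.AtPrime P) z) := vval_coe hK hP hz
    have hdvd : algebraMap R (Localization.AtPrime P) y ∣
        algebraMap R (Localization.AtPrime P) z := by
      rw [← IsDiscreteValuationRing.addVal_le_iff_dvd, ← hcy, ← hcz, Nat.cast_le]
      exact h P hP
    obtain ⟨t, ht⟩ := hdvd
    obtain ⟨⟨a, b⟩, hab⟩ := IsLocalization.mk'_surjective P.primeCompl t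
    have hzb : algebraMap R (Localization.AtPrime P) (z * (b : R)) =
        algebraMap R (Localization.AtPrime P) (y * a) := by
      rw [map_mul, map_mul, ht, ← hab, mul_assoc, IsLocalization.mk'_spec]
    have hzb' : z * (b : R) = y * a := hinj hzb
    refine ⟨a, b, b.2, ?_⟩
    have hfb : algebraMap R (FractionRing R) (z * (b : R)) =
        algebraMap R (FractionRing R) (y * a) := by rw [hzb']
    rw [map_mul, map_mul] at hfb
    rw [div_mul_eq_mul_div, div_eq_iff hfy, hfb]
    ring
  obtain ⟨r, hr⟩ := hK.2.1
    (algebraMap R (FractionRing R) z / algebraMap R (FractionRing R) y) hloc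
  refine ⟨r, ?_⟩
  have hyr : algebraMap R (FractionRing R) (y * r) = algebraMap R (FractionRing R) z := by
    rw [map_mul, hr, mul_div_cancel₀ _ hfy]
  exact (IsFractionRing.injective R (FractionRing R) hyr).symm

theorem exists_mem_height_one (hK : IsKrullDomain R) {y : R} (hy : y ≠ 0) (hyu : ¬IsUnit y) :
    ∃ P : Ideal R, IsHeightOnePrime P ∧ y ∈ P := by
  by_contra hcon
  push_neg at hcon
  have : y ∣ 1 := dvd_of_vval_le hK hy one_ne_zero fun P hP => by
    rw [vval_eq_zero_of_not_mem hK hP hy (hcon P hP)]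
    exact Nat.zero_le _
  exact hyu (isUnit_of_dvd_one this)

open scoped Classical in
/-- A "total valuation" used as induction measure. -/
noncomputable def Nval (hK : IsKrullDomain R) (y : R) : ℕ :=
  if hy : y ≠ 0 then ∑ P ∈ (hK.2.2 y hy).toFinset, vval hK P y else 0

theorem Nval_mul (hK : IsKrullDomain R) {a b : R} (ha : a ≠ 0) (hb : b ≠ 0) :
    Nval hK (a * b) = Nval hK a + Nval hK b := by
  classical
  have hab : a * b ≠ 0 := mul_ne_zero ha hb
  rw [Nval, dif_pos hab, Nval, dif_pos ha, Nval, dif_pos hb]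
  have hmemab : ∀ {W : Ideal R}, W ∈ (hK.2.2 (a * b) hab).toFinset ↔
      (IsHeightOnePrime W ∧ a * b ∈ W) := fun {W} => Set.Finite.mem_toFinset _
  have hmema : ∀ {W : Ideal R}, W ∈ (hK.2.2 a ha).toFinset ↔
      (IsHeightOnePrime W ∧ a ∈ W) := fun {W} => Set.Finite.mem_toFinset _
  have hmemb : ∀ {W : Ideal R}, W ∈ (hK.2.2 b hb).toFinset ↔
      (IsHeightOnePrime W ∧ b ∈ W) := fun {W} => Set.Finite.mem_toFinset _
  have step1 : ∑ P ∈ (hK.2.2 (a * b) hab).toFinset, vval hK P (a * b) =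
      ∑ P ∈ (hK.2.2 (a * b) hab).toFinset, (vval hK P a + vval hK P b) :=
    Finset.sum_congr rfl fun P hPm => vval_mul hK (hmemab.1 hPm).1 ha hb
  rw [step1, Finset.sum_add_distrib]
  congr 1
  · refine (Finset.sum_subset ?_ ?_).symm
    · intro P hPm
      obtain ⟨h1, h2⟩ := hmema.1 hPm
      exact hmemab.2 ⟨h1, Ideal.mul_mem_right _ _ h2⟩
    · intro P hPm hPnm
      have h1 := (hmemab.1 hPm).1
      have h2 : a ∉ P := fun hmem => hPnm (hmema.2 ⟨h1, hmem⟩)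
      exact vval_eq_zero_of_not_mem hK h1 ha h2
  · refine (Finset.sum_subset ?_ ?_).symm
    · intro P hPm
      obtain ⟨h1, h2⟩ := hmemb.1 hPm
      exact hmemab.2 ⟨h1, Ideal.mul_mem_left _ _ h2⟩
    · intro P hPm hPnm
      have h1 := (hmemab.1 hPm).1
      have h2 : b ∉ P := fun hmem => hPnm (hmemb.2 ⟨h1, hmem⟩)
      exact vval_eq_zero_of_not_mem hK h1 hb h2

theorem Nval_pos (hK : IsKrullDomain R) {y : R} (hy : y ≠ 0) (hyu : ¬IsUnit y) :
    1 ≤ Nval hK y := by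
  classical
  obtain ⟨P, hP, hyP⟩ := exists_mem_height_one hK hy hyu
  rw [Nval, dif_pos hy]
  have hPm : P ∈ (hK.2.2 y hy).toFinset := (Set.Finite.mem_toFinset _).2 ⟨hP, hyP⟩
  calc 1 ≤ vval hK P y := (vval_pos_iff hK hP hy).2 hyP
    _ ≤ _ := Finset.single_le_sum (f := fun P => vval hK P y) (fun _ _ => Nat.zero_le _) hPm

theorem krull_atomic (hK : IsKrullDomain R) : IsAtomicDomain R := by
  intro y hy hyu
  suffices H : ∀ (N : ℕ) (y : R), y ≠ 0 → ¬IsUnit y → Nval hK y ≤ N →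
      ∃ s : Multiset R, (∀ b ∈ s, Irreducible b) ∧ s.prod = y from
    H (Nval hK y) y hy hyu le_rfl
  intro N
  induction N with
  | zero =>
    intro y hy hyu hle
    have := Nval_pos hK hy hyu
    omega
  | succ N ih =>
    intro y hy hyu hle
    by_cases hirr : Irreducible y
    · exact ⟨{y}, by simpa using hirr, by simp⟩
    · rw [irreducible_iff] at hirr
      push_neg at hirr
      obtain ⟨a, b, hab, ha, hb⟩ := hirr hyu
      have ha0 : a ≠ 0 := fun h => hy (by rw [hab, h, zero_mul])
      have hb0 : b ≠ 0 := fun h => hy (by rw [hab, h, mul_zero])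
      have hmul : Nval hK (a * b) = Nval hK a + Nval hK b := Nval_mul hK ha0 hb0
      have hNa := Nval_pos hK ha0 ha
      have hNb := Nval_pos hK hb0 hb
      rw [hab] at hle
      obtain ⟨sa, hsa, hpa⟩ := ih a ha0 ha (by omega)
      obtain ⟨sb, hsb, hpb⟩ := ih b hb0 hb (by omega)
      exact ⟨sa + sb, fun c hc => (Multiset.mem_add.1 hc).elim (hsa c) (hsb c),
        by rw [Multiset.prod_add, hpa, hpb, hab]⟩

end KrullAux
section ZAux

variable {R : Type*} [CommRing R] [IsDomain R]

/-- If `xⁿ` factors uniquely and `α` is an irreducible factor of `x`, then every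
nonunit divisor of `α * α` is divisible by `α`. -/
theorem atom_dvd_of_dvd_sq (hK : IsKrullDomain R) {x : R} {n : ℕ} (hn : 2 ≤ n)
    (hfu : FactorsUniquely (x ^ n)) {s : Multiset R} (hs : ∀ b ∈ s, Irreducible b)
    (hprod : s.prod = x) {α : R} (hα : α ∈ s) {f : R} (hf : ¬IsUnit f)
    (hdvd : f ∣ α * α) : α ∣ f := by
  classical
  have hxn0 : x ^ n ≠ 0 := hfu.1
  have hx0 : x ≠ 0 := fun h => hxn0 (by rw [h, zero_pow (by omega)])
  have hα0 : α ≠ 0 := fun h => hx0 (by rw [← hprod]; exact Multiset.prod_eq_zero (h ▸ hα))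
  obtain ⟨g, hg⟩ := hdvd
  have hαα0 : α * α ≠ 0 := mul_ne_zero hα0 hα0
  have hf0 : f ≠ 0 := fun h => hαα0 (by rw [hg, h, zero_mul])
  have hg0 : g ≠ 0 := fun h => hαα0 (by rw [hg, h, mul_zero])
  by_cases hgu : IsUnit g
  · obtain ⟨u, hu⟩ := hgu
    refine ⟨α * ↑u⁻¹, ?_⟩
    rw [← mul_assoc, hg, ← hu, mul_assoc, Units.mul_inv, mul_one]
  · obtain ⟨sf, hsf, hpf⟩ := krull_atomic hK f hf0 hf
    obtain ⟨sg, hsg, hpg⟩ := krull_atomic hK g hg0 hgu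
    have hle : ({α, α} : Multiset R) ≤ n • s := by
      rw [Multiset.le_iff_count]
      intro b
      rw [Multiset.count_nsmul]
      by_cases hb : b = α
      · subst hb
        have h1 : 1 ≤ Multiset.count b s := Multiset.one_le_count_iff_mem.2 hα
        have h2 : Multiset.count b ({b, b} : Multiset R) = 2 := by
          simp [Multiset.insert_eq_cons]
        have h3 : n * 1 ≤ n * Multiset.count b s := Nat.mul_le_mul_left n h1
        omega
      · have h2 : Multiset.count b ({α, α} : Multiset R) = 0 := by
          simp [Multiset.insert_eq_cons, hb]
        omega
    set rest : Multiset R := n • s - {α, α} with hrest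
    have hsplit : ({α, α} : Multiset R) + rest = n • s := by
      rw [hrest, add_comm]
      exact tsub_add_cancel_of_le hle
    have hpaa : ({α, α} : Multiset R).prod = α * α := by
      simp [Multiset.insert_eq_cons]
    have hXX : (n • s).prod = x ^ n := by rw [Multiset.prod_nsmul, hprod]
    have hrel := hfu.2.2 (sf + sg + rest) (n • s)
      (fun c hc => by
        rcases Multiset.mem_add.1 hc with h | h
        · rcases Multiset.mem_add.1 h with h' | h'
          · exact hsf c h'
          · exact hsg c h'
        · refine hs c (Multiset.mem_of_mem_nsmul (n := n)
            (Multiset.mem_of_le (t := n • s) (by rw [hrest]; exact tsub_le_self) h)))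
      (fun c hc => hs c (Multiset.mem_of_mem_nsmul hc))
      (by
        rw [Multiset.prod_add, Multiset.prod_add, hpf, hpg, ← hg, ← hpaa,
          ← Multiset.prod_add, hsplit, hXX])
      hXX
    rw [Associates.rel_associated_iff_map_eq_map, ← hsplit] at hrel
    simp only [Multiset.map_add] at hrel
    have hcanc : Multiset.map Associates.mk sf + Multiset.map Associates.mk sg =
        Multiset.map Associates.mk ({α, α} : Multiset R) := add_right_cancel hrel
    have hmap2 : Multiset.map Associates.mk ({α, α} : Multiset R) =
        ({Associates.mk α, Associates.mk α} : Multiset (Associates R)) := by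
      simp [Multiset.insert_eq_cons]
    have hcards : Multiset.card sf + Multiset.card sg = 2 := by
      have := congrArg Multiset.card hcanc
      simpa [hmap2, Multiset.insert_eq_cons] using this
    have hsf1 : Multiset.card sf ≠ 0 := fun h => hf (by
      rw [← hpf, Multiset.card_eq_zero.1 h, Multiset.prod_zero]
      exact isUnit_one)
    have hsg1 : Multiset.card sg ≠ 0 := fun h => hgu (by
      rw [← hpg, Multiset.card_eq_zero.1 h, Multiset.prod_zero]
      exact isUnit_one)
    obtain ⟨φ, hφ⟩ := Multiset.card_eq_one.1 (show Multiset.card sf = 1 by omega)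
    rw [hφ, Multiset.map_singleton, hmap2] at hcanc
    have hmemq : Associates.mk φ ∈
        ({Associates.mk α, Associates.mk α} : Multiset (Associates R)) := by
      rw [← hcanc]
      exact Multiset.mem_add.2 (Or.inl (Multiset.mem_singleton_self _))
    have heq : Associates.mk φ = Associates.mk α := by
      simpa [Multiset.insert_eq_cons] using hmemq
    have hpf' : φ = f := by rw [hφ, Multiset.prod_singleton] at hpf; exact hpf
    exact hpf' ▸ (Associates.mk_eq_mk_iff_associated.1 heq).symm.dvd

/-- Key lemma: each irreducible factor of `x` lies in at most one height-one prime. -/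
theorem atom_not_mem_of_ne (hK : IsKrullDomain R) (hZ : HasZProperty R) {x : R} {n : ℕ}
    (hn : 2 ≤ n) (hfu : FactorsUniquely (x ^ n)) {s : Multiset R}
    (hs : ∀ b ∈ s, Irreducible b) (hprod : s.prod = x) {α : R} (hα : α ∈ s)
    {P Q : Ideal R} (hP : IsHeightOnePrime P) (hQ : IsHeightOnePrime Q) (hne : P ≠ Q)
    (hαP : α ∈ P) : α ∉ Q := by
  classical
  intro hαQ
  have hxn0 : x ^ n ≠ 0 := hfu.1
  have hx0 : x ≠ 0 := fun h => hxn0 (by rw [h, zero_pow (by omega)])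
  have hα0 : α ≠ 0 := fun h => hx0 (by rw [← hprod]; exact Multiset.prod_eq_zero (h ▸ hα))
  have hαirr := hs α hα
  have hQP : ¬Q ≤ P := by
    intro hle
    rcases lt_or_eq_of_le hle with hlt | heq
    · exact hQ.2.1 (hP.2.2 Q hQ.1 hlt)
    · exact hne heq.symm
  obtain ⟨z', hz'Q, hz'P⟩ := SetLike.not_le_iff_exists.1 hQP
  have hz'0 : z' ≠ 0 := fun h => hz'P (h ▸ P.zero_mem)
  have hmemF : ∀ {W : Ideal R}, W ∈ (hK.2.2 α hα0).toFinset ↔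
      (IsHeightOnePrime W ∧ α ∈ W) := fun {W} => Set.Finite.mem_toFinset _
  set F := (hK.2.2 α hα0).toFinset with hF
  have hzW : ∀ W : Ideal R, ∃ zw : R, zw ∉ Q ∧ (W ∈ F.erase Q → zw ∈ W) := by
    intro W
    by_cases hWmem : W ∈ F.erase Q
    · have hW := (hmemF.1 (Finset.mem_of_mem_erase hWmem)).1
      have hWQ : W ≠ Q := Finset.ne_of_mem_erase hWmem
      have hWle : ¬W ≤ Q := by
        intro hle
        rcases lt_or_eq_of_le hle with hlt | heq
        · exact hW.2.1 (hQ.2.2 W hW.1 hlt)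
        · exact hWQ heq
      obtain ⟨zw, h1, h2⟩ := SetLike.not_le_iff_exists.1 hWle
      exact ⟨zw, h2, fun _ => h1⟩
    · exact ⟨1, (Ideal.ne_top_iff_one Q).1 hQ.1.ne_top, fun h => absurd h hWmem⟩
  choose zf hzfQ hzfW using hzW
  set d := ∏ W ∈ F.erase Q, zf W ^ (2 * vval hK W α + 1) with hd
  set e := z' ^ (2 * vval hK Q α) with he
  have hPF : P ∈ F.erase Q := Finset.mem_erase.2 ⟨hne, hmemF.2 ⟨hP, hαP⟩⟩
  have hzf0 : ∀ W : Ideal R, zf W ≠ 0 := fun W h => hzfQ W (h ▸ Q.zero_mem)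
  have hd0 : d ≠ 0 := Finset.prod_ne_zero_iff.2 fun W _ => pow_ne_zero _ (hzf0 W)
  have hdQ : d ∉ Q := by
    intro hdQ
    obtain ⟨W, _, hWpow⟩ := (Ideal.IsPrime.prod_mem_iff (hp := hQ.1)).1 hdQ
    exact hzfQ W (hQ.1.mem_of_pow_mem _ hWpow)
  have hdP : d ∈ P := by
    rw [hd, ← Finset.mul_prod_erase _ _ hPF]
    exact Ideal.mul_mem_right _ _ (Ideal.pow_mem_of_mem _ (hzfW P hPF) _ (by omega))
  have hvQα : 1 ≤ vval hK Q α := (vval_pos_iff hK hQ hα0).2 hαQ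
  have hvPα : 1 ≤ vval hK P α := (vval_pos_iff hK hP hα0).2 hαP
  have he0 : e ≠ 0 := pow_ne_zero _ hz'0
  have heQ : e ∈ Q := Ideal.pow_mem_of_mem _ hz'Q _ (by omega)
  have heP : e ∉ P := fun h => hz'P (hP.1.mem_of_pow_mem _ h)
  have hvdP : 2 * vval hK P α + 1 ≤ vval hK P d := by
    have h4 : zf P ^ (2 * vval hK P α + 1) ∣ d := Finset.dvd_prod_of_mem _ hPF
    have h5 := vval_le_of_dvd hK hP hd0 h4
    have h6 : vval hK P (zf P ^ (2 * vval hK P α + 1)) =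
        (2 * vval hK P α + 1) * vval hK P (zf P) := vval_pow hK hP (hzf0 P) _
    have h7 : 1 ≤ vval hK P (zf P) := (vval_pos_iff hK hP (hzf0 P)).2 (hzfW P hPF)
    have h8 : (2 * vval hK P α + 1) * 1 ≤ (2 * vval hK P α + 1) * vval hK P (zf P) :=
      Nat.mul_le_mul_left _ h7
    omega
  have hdvd : α * α ∣ d * e := by
    apply dvd_of_vval_le hK (mul_ne_zero hα0 hα0) (mul_ne_zero hd0 he0)
    intro W hW
    rw [vval_mul hK hW hα0 hα0, vval_mul hK hW hd0 he0]
    by_cases hαW : α ∈ W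
    · by_cases hWQ : W = Q
      · subst hWQ
        have h1 : vval hK W e = 2 * vval hK W α * vval hK W z' := vval_pow hK hW hz'0 _
        have h2 : 1 ≤ vval hK W z' := (vval_pos_iff hK hW hz'0).2 hz'Q
        have h3 : 2 * vval hK W α * 1 ≤ 2 * vval hK W α * vval hK W z' :=
          Nat.mul_le_mul_left _ h2
        omega
      · have hWF : W ∈ F.erase Q := Finset.mem_erase.2 ⟨hWQ, hmemF.2 ⟨hW, hαW⟩⟩
        have h4 : zf W ^ (2 * vval hK W α + 1) ∣ d := Finset.dvd_prod_of_mem _ hWF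
        have h5 := vval_le_of_dvd hK hW hd0 h4
        have h6 : vval hK W (zf W ^ (2 * vval hK W α + 1)) =
            (2 * vval hK W α + 1) * vval hK W (zf W) := vval_pow hK hW (hzf0 W) _
        have h7 : 1 ≤ vval hK W (zf W) := (vval_pos_iff hK hW (hzf0 W)).2 (hzfW W hWF)
        have h8 : (2 * vval hK W α + 1) * 1 ≤ (2 * vval hK W α + 1) * vval hK W (zf W) :=
          Nat.mul_le_mul_left _ h7
        omega
    · have h9 : vval hK W α = 0 := vval_eq_zero_of_not_mem hK hW hα0 hαW
      omega
  obtain ⟨c, hc⟩ := hdvd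
  have hde0 : d * e ≠ 0 := mul_ne_zero hd0 he0
  have hc0 : c ≠ 0 := fun h => hde0 (by rw [hc, h, mul_zero])
  have hcP : c ∈ P := by
    have h1 : vval hK P (d * e) = vval hK P (α * α) + vval hK P c := by
      rw [hc, vval_mul hK hP (mul_ne_zero hα0 hα0) hc0]
    have h2 : vval hK P (α * α) = vval hK P α + vval hK P α := vval_mul hK hP hα0 hα0
    have h3 : vval hK P (d * e) = vval hK P d + vval hK P e := vval_mul hK hP hd0 he0
    exact (vval_pos_iff hK hP hc0).1 (by omega)
  have hcu : ¬IsUnit c := fun hu => hP.1.ne_top (Ideal.eq_top_of_isUnit_mem _ hcP hu)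
  have hdu : ¬IsUnit d := fun hu => hP.1.ne_top (Ideal.eq_top_of_isUnit_mem _ hdP hu)
  have heu : ¬IsUnit e := fun hu => hQ.1.ne_top (Ideal.eq_top_of_isUnit_mem _ heQ hu)
  rcases hZ α α c d e hα0 hα0 hc0 hd0 he0 hαirr.not_isUnit hαirr.not_isUnit hcu hdu heu hc.symm with
    ⟨f, hfnu, hfαα, hfd⟩ | ⟨f, hfnu, hfαα, hfe⟩
  · have hαf := atom_dvd_of_dvd_sq hK hn hfu hs hprod hα hfnu hfαα
    obtain ⟨t, ht⟩ := hαf.trans hfd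
    exact hdQ (ht ▸ Ideal.mul_mem_right _ _ hαQ)
  · have hαf := atom_dvd_of_dvd_sq hK hn hfu hs hprod hα hfnu hfαα
    obtain ⟨t, ht⟩ := hαf.trans hfe
    exact heP (ht ▸ Ideal.mul_mem_right _ _ hαP)

end ZAux
/-- Let `R` be a Krull domain with the Z-property. If `x` is a
nonunit such that `xⁿ` factors uniquely for some `n > 1`, then the principal ideal
`(xⁿ)` is a finite product of principal symbolic powers of height-one primes. -/
theorem span_pow_eq_prod_symbolic_powers (R : Type*) [CommRing R] [IsDomain R]
    (hKrull : IsKrullDomain R) (hZ : HasZProperty R)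
    (x : R) (hx : ¬IsUnit x) (n : ℕ) (hn : 1 < n)
    (hfu : FactorsUniquely (x ^ n)) :
    ∃ (m : ℕ) (P : Fin m → Ideal R) (k : Fin m → ℕ)
      (h : ∀ i, IsHeightOnePrime (P i)),
      (∀ i, ∃ a : R, symbolicPower (P i) (h i).1 (k i) = Ideal.span {a}) ∧
      Ideal.span {x ^ n} = ∏ i, symbolicPower (P i) (h i).1 (k i) := by
  have hn2 : 2 ≤ n := hn
  have hxn0 : x ^ n ≠ 0 := hfu.1
  have hx0 : x ≠ 0 := fun h => hxn0 (by rw [h, zero_pow (by omega)])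
  obtain ⟨s, hs, hprod⟩ := krull_atomic hKrull x hx0 hx
  have key : ∀ β ∈ n • s, ∃ (P : Ideal R) (hP : IsHeightOnePrime P) (k : ℕ),
      symbolicPower P hP.1 k = Ideal.span {β} := by
    intro β hβn
    have hβ : β ∈ s := Multiset.mem_of_mem_nsmul hβn
    have hβ0 : β ≠ 0 := fun h => hx0 (by rw [← hprod]; exact Multiset.prod_eq_zero (h ▸ hβ))
    have hβirr := hs β hβ
    obtain ⟨P, hP, hβP⟩ := exists_mem_height_one hKrull hβ0 hβirr.not_isUnit
    refine ⟨P, hP, vval hKrull P β, ?_⟩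
    ext y
    rw [mem_symbolicPower_iff hKrull hP, Ideal.mem_span_singleton]
    constructor
    · rintro (rfl | hky)
      · exact dvd_zero β
      · rcases eq_or_ne y 0 with rfl | hy0
        · exact dvd_zero β
        · apply dvd_of_vval_le hKrull hβ0 hy0
          intro W hW
          by_cases hWP : W = P
          · subst hWP; exact hky
          · have hβW : β ∉ W := fun hβW =>
              atom_not_mem_of_ne hKrull hZ hn2 hfu hs hprod hβ hW hP hWP hβW hβP
            rw [vval_eq_zero_of_not_mem hKrull hW hβ0 hβW]
            exact Nat.zero_le _
    · rintro ⟨t, rfl⟩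
      rcases eq_or_ne t 0 with rfl | ht0
      · exact Or.inl (mul_zero β)
      · refine Or.inr ?_
        rw [vval_mul hKrull hP hβ0 ht0]
        exact Nat.le_add_right _ _
  have hmem : ∀ i : Fin (n • s).toList.length, (n • s).toList.get i ∈ n • s := fun i =>
    Multiset.mem_toList.1 (List.get_mem _ i)
  choose Pf hPf kf hkf using fun i : Fin (n • s).toList.length =>
    key ((n • s).toList.get i) (hmem i)
  refine ⟨(n • s).toList.length, Pf, kf, hPf,
    fun i => ⟨(n • s).toList.get i, hkf i⟩, ?_⟩
  have hxprod : x ^ n = ∏ i, (n • s).toList.get i := by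
    rw [← List.prod_ofFn, List.ofFn_get, Multiset.prod_toList, Multiset.prod_nsmul, hprod]
  calc Ideal.span {x ^ n} = Ideal.span {∏ i, (n • s).toList.get i} := by rw [hxprod]
    _ = ∏ i, Ideal.span {(n • s).toList.get i} := (Ideal.prod_span_singleton _ _).symm
    _ = ∏ i, symbolicPower (Pf i) (hPf i).1 (kf i) :=
        Finset.prod_congr rfl fun i _ => (hkf i).symm
end

section
/- Let F be a field and let R = F[x, y, zx, zy] be the subring of the polynomial ring F[x,y,z] generated over F by the elements x, y, zx, zy. Then R does not have the Z-property. -/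
section Aux
open MvPolynomial

variable {F : Type*} [Field F]

lemma mono_good (m0 : Fin 3 →₀ ℕ) (c : F) (h : m0 2 ≤ m0 0 + m0 1) :
    ∀ m ∈ (monomial m0 c).support, m 2 ≤ m 0 + m 1 := by
  classical
  intro m hm
  rw [support_monomial] at hm
  by_cases hc : c = 0
  · simp [hc] at hm
  · simp [hc] at hm
    subst hm; exact h

noncomputable def goodSub (F : Type*) [Field F] : Subalgebra F (MvPolynomial (Fin 3) F) where
  carrier := {p | ∀ m ∈ p.support, m 2 ≤ m 0 + m 1}
  mul_mem' := by
    classical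
    intro p q hp hq m hm
    have h := MvPolynomial.support_mul p q hm
    rw [Finset.mem_add] at h
    obtain ⟨u, hu, v, hv, rfl⟩ := h
    have h1 := hp u hu
    have h2 := hq v hv
    simp only [Finsupp.add_apply]
    omega
  one_mem' := by
    intro m hm
    rw [show (1 : MvPolynomial (Fin 3) F) = monomial 0 1 by rw [← C_1, C_apply]] at hm
    exact mono_good 0 1 (by simp) m hm
  add_mem' := by
    classical
    intro p q hp hq m hm
    rcases Finset.mem_union.mp (MvPolynomial.support_add hm) with h | h
    · exact hp m h
    · exact hq m h
  zero_mem' := by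
    intro m hm
    simp at hm
  algebraMap_mem' := by
    intro r m hm
    rw [show (algebraMap F (MvPolynomial (Fin 3) F) r) = monomial 0 r by
      rw [algebraMap_eq, C_apply]] at hm
    exact mono_good 0 r (by simp) m hm

lemma eq_C_of_isUnit_mv {p : MvPolynomial (Fin 3) F} (h : IsUnit p) :
    ∃ c : F, c ≠ 0 ∧ p = C c := by
  have key : ∀ (n : ℕ) (a : F), (MvPolynomial.finSuccEquiv F n).symm (Polynomial.C (C a)) = C a :=
    fun n a => RingHom.congr_fun (finSuccEquiv_comp_C_eq_C n) a
  have h1 : IsUnit (MvPolynomial.finSuccEquiv F 2 p) := h.map (MvPolynomial.finSuccEquiv F 2)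
  obtain ⟨r1, hr1, e1⟩ := Polynomial.isUnit_iff.mp h1
  have h2 : IsUnit (MvPolynomial.finSuccEquiv F 1 r1) := hr1.map (MvPolynomial.finSuccEquiv F 1)
  obtain ⟨r2, hr2, e2⟩ := Polynomial.isUnit_iff.mp h2
  have h3 : IsUnit (MvPolynomial.finSuccEquiv F 0 r2) := hr2.map (MvPolynomial.finSuccEquiv F 0)
  obtain ⟨r3, hr3, e3⟩ := Polynomial.isUnit_iff.mp h3
  obtain ⟨c, rfl⟩ := MvPolynomial.C_surjective (Fin 0) r3
  refine ⟨c, ?_, ?_⟩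
  · rintro rfl
    simp only [map_zero] at hr3
    exact not_isUnit_zero hr3
  · have hr2c : r2 = C c := by
      have := congrArg (MvPolynomial.finSuccEquiv F 0).symm e3
      rw [AlgEquiv.symm_apply_apply] at this
      rw [← this, key]
    have hr1c : r1 = C c := by
      rw [hr2c] at e2
      have := congrArg (MvPolynomial.finSuccEquiv F 1).symm e2
      rw [AlgEquiv.symm_apply_apply] at this
      rw [← this, key]
    rw [hr1c] at e1
    have := congrArg (MvPolynomial.finSuccEquiv F 2).symm e1
    rw [AlgEquiv.symm_apply_apply] at this
    rw [← this, key]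

lemma prime_X0 : Prime (X 0 : MvPolynomial (Fin 3) F) := by
  rw [← MulEquiv.prime_iff (MvPolynomial.finSuccEquiv F 2).toMulEquiv]
  have : (MvPolynomial.finSuccEquiv F 2).toMulEquiv (X 0) = Polynomial.X := finSuccEquiv_X_zero
  rw [this]
  exact Polynomial.prime_X

lemma mem_goodSub_iff {p : MvPolynomial (Fin 3) F} :
    p ∈ goodSub F ↔ ∀ m ∈ p.support, m 2 ≤ m 0 + m 1 := Iff.rfl

lemma bad_not_mem (b : F) (hb : b ≠ 0) (n : ℕ) (hn : n ≤ 1) :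
    (X 2 ^ 2 * X 0 ^ n * C b : MvPolynomial (Fin 3) F) ∉ goodSub F := by
  classical
  intro hmem
  have hform : (X 2 ^ 2 * X 0 ^ n * C b : MvPolynomial (Fin 3) F) =
      monomial (Finsupp.single 2 2 + Finsupp.single 0 n) b := by
    rw [X_pow_eq_monomial, X_pow_eq_monomial, C_apply, monomial_mul, monomial_mul]
    simp
  rw [mem_goodSub_iff, hform] at hmem
  have hsupp : (Finsupp.single 2 2 + Finsupp.single 0 n : Fin 3 →₀ ℕ) ∈
      (monomial (Finsupp.single 2 2 + Finsupp.single 0 n) b).support := by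
    rw [support_monomial, if_neg hb]
    exact Finset.mem_singleton_self _
  have := hmem _ hsupp
  simp [Finsupp.add_apply, Finsupp.single_apply] at this
  omega

lemma classify_dvd {f : MvPolynomial (Fin 3) F} (hf : f ∣ X 0 ^ 2) :
    (∃ b : F, b ≠ 0 ∧ f = C b) ∨
      (∃ i, 1 ≤ i ∧ i ≤ 2 ∧ ∃ b : F, b ≠ 0 ∧ f = X 0 ^ i * C b) := by
  obtain ⟨i, hi, hassoc⟩ := (dvd_prime_pow prime_X0 2).mp hf
  obtain ⟨u, hu⟩ := hassoc
  obtain ⟨b, hb0, hbc⟩ := eq_C_of_isUnit_mv u.isUnit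
  have hfeq : f * C b = X 0 ^ i := by rw [← hbc]; exact hu
  have hfval : f = X 0 ^ i * C b⁻¹ := by
    rw [← hfeq, mul_assoc, ← C_mul, mul_inv_cancel₀ hb0, C_1, mul_one]
  rcases Nat.eq_zero_or_pos i with h0 | h1
  · left
    exact ⟨b⁻¹, inv_ne_zero hb0, by rw [hfval, h0, pow_zero, one_mul]⟩
  · right
    exact ⟨i, h1, hi, b⁻¹, inv_ne_zero hb0, hfval⟩

lemma monomialSubring_le_goodSub : monomialSubring F ≤ goodSub F := by
  apply Algebra.adjoin_le
  rintro p hp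
  simp only [Set.mem_insert_iff, Set.mem_singleton_iff] at hp
  have hX : ∀ i : Fin 3, (X i : MvPolynomial (Fin 3) F) = monomial (Finsupp.single i 1) 1 :=
    fun i => by rw [← pow_one (X i : MvPolynomial (Fin 3) F), X_pow_eq_monomial]
  have hXX : ∀ i : Fin 3, (X 2 * X i : MvPolynomial (Fin 3) F) =
      monomial (Finsupp.single 2 1 + Finsupp.single i 1) 1 := fun i => by
    rw [hX 2, hX i, monomial_mul, one_mul]
  rcases hp with rfl | rfl | rfl | rfl
  · rw [SetLike.mem_coe, hX 0]
    exact mono_good _ _ (by simp [Finsupp.single_apply]) 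
  · rw [SetLike.mem_coe, hX 1]
    exact mono_good _ _ (by simp [Finsupp.single_apply])
  · rw [SetLike.mem_coe, hXX 0]
    exact mono_good _ _ (by simp [Finsupp.single_apply])
  · rw [SetLike.mem_coe, hXX 1]
    exact mono_good _ _ (by simp [Finsupp.single_apply])

end Aux

open MvPolynomial

/-- For any field `F`, the ring `F[x, y, zx, zy]` does not have
the Z-property. -/
theorem monomialSubring_not_zproperty (F : Type*) [Field F] :
    ¬ HasZProperty (monomialSubring F) := by
  classical
  intro h
  have hx : (X 0 : MvPolynomial (Fin 3) F) ∈ monomialSubring F :=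
    Algebra.subset_adjoin (by simp)
  have hy : (X 1 : MvPolynomial (Fin 3) F) ∈ monomialSubring F :=
    Algebra.subset_adjoin (by simp)
  have hzx : (X 2 * X 0 : MvPolynomial (Fin 3) F) ∈ monomialSubring F :=
    Algebra.subset_adjoin (by simp)
  have hzy : (X 2 * X 1 : MvPolynomial (Fin 3) F) ∈ monomialSubring F :=
    Algebra.subset_adjoin (by simp)
  let a : monomialSubring F := ⟨X 0, hx⟩
  let c : monomialSubring F := ⟨(X 2 * X 1) ^ 2, pow_mem hzy 2⟩
  let d : monomialSubring F := ⟨(X 2 * X 0) ^ 2, pow_mem hzx 2⟩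
  let e : monomialSubring F := ⟨(X 1) ^ 2, pow_mem hy 2⟩
  have val_ne : ∀ (p : MvPolynomial (Fin 3) F) (hp : p ∈ monomialSubring F), p ≠ 0 →
      (⟨p, hp⟩ : monomialSubring F) ≠ 0 := by
    intro p hp hpne hh
    exact hpne (by simpa using congrArg Subtype.val hh)
  have val_nu : ∀ (p : MvPolynomial (Fin 3) F) (hp : p ∈ monomialSubring F),
      eval (fun _ => (0 : F)) p = 0 → ¬IsUnit (⟨p, hp⟩ : monomialSubring F) := by
    intro p hp hp0 hu
    have h1 : IsUnit p := hu.map (monomialSubring F).val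
    have h2 : IsUnit (eval (fun _ => (0 : F)) p) := h1.map (eval (fun _ => (0 : F)))
    rw [hp0] at h2
    exact not_isUnit_zero h2
  have hane : a ≠ 0 := val_ne _ _ (X_ne_zero 0)
  have hcne : c ≠ 0 := val_ne _ _ (pow_ne_zero _ (mul_ne_zero (X_ne_zero 2) (X_ne_zero 1)))
  have hdne : d ≠ 0 := val_ne _ _ (pow_ne_zero _ (mul_ne_zero (X_ne_zero 2) (X_ne_zero 0)))
  have hene : e ≠ 0 := val_ne _ _ (pow_ne_zero _ (X_ne_zero 1))
  have hanu : ¬IsUnit a := val_nu _ _ (by simp)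
  have hcnu : ¬IsUnit c := val_nu _ _ (by simp)
  have hdnu : ¬IsUnit d := val_nu _ _ (by simp)
  have henu : ¬IsUnit e := val_nu _ _ (by simp)
  have heq : a * a * c = d * e := by
    apply Subtype.ext
    show (X 0 : MvPolynomial (Fin 3) F) * X 0 * (X 2 * X 1) ^ 2 = (X 2 * X 0) ^ 2 * (X 1) ^ 2
    ring
  -- the common analysis of the common factor with `a * a`
  have main : ∀ f : monomialSubring F, ¬IsUnit f → f ∣ a * a →
      (∃ i, 1 ≤ i ∧ i ≤ 2 ∧ ∃ b : F, b ≠ 0 ∧ (f : MvPolynomial (Fin 3) F) = X 0 ^ i * C b) := by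
    intro f hfu hfab
    obtain ⟨g, hg⟩ := hfab
    have hg' : (X 0 : MvPolynomial (Fin 3) F) ^ 2 = ↑f * ↑g := by
      have h2 := congrArg Subtype.val hg
      simpa [sq] using h2
    rcases classify_dvd (Dvd.intro _ hg'.symm) with ⟨b, hb0, hfC⟩ | hgood
    · exfalso
      apply hfu
      have hmem : (C b⁻¹ : MvPolynomial (Fin 3) F) ∈ monomialSubring F := by
        have h3 := (monomialSubring F).algebraMap_mem b⁻¹
        rwa [algebraMap_eq] at h3
      refine IsUnit.of_mul_eq_one (a := f) ⟨C b⁻¹, hmem⟩ (Subtype.ext ?_)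
      show (f : MvPolynomial (Fin 3) F) * C b⁻¹ = 1
      rw [hfC, ← C_mul, mul_inv_cancel₀ hb0, C_1]
    · exact hgood
  rcases h a a c d e hane hane hcne hdne hene hanu hanu hcnu hdnu henu heq with
    ⟨f, hfu, hfab, hfd⟩ | ⟨f, hfu, hfab, hfe⟩
  · -- common factor with d = (zx)^2
    obtain ⟨i, hi1, hi2, b, hb0, hfeq⟩ := main f hfu hfab
    obtain ⟨k, hk⟩ := hfd
    have hk' : ((X 2 * X 0) ^ 2 : MvPolynomial (Fin 3) F) = ↑f * ↑k := by
      have h2 := congrArg Subtype.val hk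
      simpa using h2
    have hii : i + (2 - i) = 2 := by omega
    have hkey : X 0 ^ i * (k : MvPolynomial (Fin 3) F) =
        X 0 ^ i * (X 2 ^ 2 * X 0 ^ (2 - i) * C b⁻¹) := by
      calc X 0 ^ i * (k : MvPolynomial (Fin 3) F)
          = (X 0 ^ i * C b * ↑k) * C b⁻¹ := by
            have hcb : (C b : MvPolynomial (Fin 3) F) * C b⁻¹ = 1 := by
              rw [← C_mul, mul_inv_cancel₀ hb0, C_1]
            have hre : (X 0 ^ i * C b * (k : MvPolynomial (Fin 3) F)) * C b⁻¹ =
                X 0 ^ i * (k : MvPolynomial (Fin 3) F) * (C b * C b⁻¹) := by ring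
            rw [hre, hcb, mul_one]
        _ = (X 2 * X 0) ^ 2 * C b⁻¹ := by rw [← hfeq, ← hk']
        _ = X 0 ^ i * (X 2 ^ 2 * X 0 ^ (2 - i) * C b⁻¹) := by
            rw [show ((X 2 * X 0 : MvPolynomial (Fin 3) F)) ^ 2 = X 2 ^ 2 * X 0 ^ 2 by ring,
              show ((X 0 : MvPolynomial (Fin 3) F)) ^ 2 = X 0 ^ i * X 0 ^ (2 - i) by
                rw [← pow_add, hii]]
            ring
    have hkval : (k : MvPolynomial (Fin 3) F) = X 2 ^ 2 * X 0 ^ (2 - i) * C b⁻¹ :=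
      mul_left_cancel₀ (pow_ne_zero i (X_ne_zero 0)) hkey
    have hkmem : (k : MvPolynomial (Fin 3) F) ∈ goodSub F := monomialSubring_le_goodSub k.2
    rw [hkval] at hkmem
    exact bad_not_mem b⁻¹ (inv_ne_zero hb0) (2 - i) (by omega) hkmem
  · -- common factor with e = y^2
    obtain ⟨i, hi1, hi2, b, hb0, hfeq⟩ := main f hfu hfab
    obtain ⟨k, hk⟩ := hfe
    have hk' : ((X 1) ^ 2 : MvPolynomial (Fin 3) F) = ↑f * ↑k := by
      have h2 := congrArg Subtype.val hk
      simpa using h2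
    have hdvd : (X 0 : MvPolynomial (Fin 3) F) ∣ X 1 ^ 2 := by
      rw [hk', hfeq]
      exact ((dvd_pow_self (X 0 : MvPolynomial (Fin 3) F) (by omega)).mul_right (C b)).mul_right _
    have h01 := prime_X0.dvd_of_dvd_pow hdvd
    rw [X_dvd_X] at h01
    exact absurd h01 (by decide)
end

section
/- Let R be a Dedekind domain whose ideal class group Cl(R) is cyclic of order 3 and such that every nonprincipal prime ideal of R lies in one fixed generator class [1] of Cl(R). Then R has the Z-property. -/
open UniqueFactorizationMonoid

section Aux

variable {R : Type*} [CommRing R] [IsDomain R] [IsDedekindDomain R]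

open scoped nonZeroDivisors

open Classical in
/-- The class of a (possibly zero) ideal, with junk value `1` at the zero ideal. -/
noncomputable def clOf (I : Ideal R) : ClassGroup R :=
  if h : I = 0 then 1 else ClassGroup.mk0 ⟨I, mem_nonZeroDivisors_of_ne_zero h⟩

lemma clOf_ne (I : Ideal R) (h : I ≠ 0) :
    clOf I = ClassGroup.mk0 ⟨I, mem_nonZeroDivisors_of_ne_zero h⟩ := by
  rw [clOf, dif_neg h]

lemma clOf_one : clOf (1 : Ideal R) = 1 := by
  have h1 : (1 : Ideal R) ≠ 0 := by
    rw [Ideal.one_eq_top, Ideal.zero_eq_bot]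
    exact top_ne_bot
  rw [clOf_ne _ h1]
  exact (ClassGroup.mk0_eq_one_iff _).mpr ⟨⟨1, by simp⟩⟩

lemma clOf_mul (I J : Ideal R) (hI : I ≠ 0) (hJ : J ≠ 0) :
    clOf (I * J) = clOf I * clOf J := by
  have hIJ : I * J ≠ 0 := mul_ne_zero hI hJ
  rw [clOf_ne _ hIJ, clOf_ne _ hI, clOf_ne _ hJ]
  rw [show (⟨I * J, mem_nonZeroDivisors_of_ne_zero hIJ⟩ : (Ideal R)⁰) =
      ⟨I, mem_nonZeroDivisors_of_ne_zero hI⟩ * ⟨J, mem_nonZeroDivisors_of_ne_zero hJ⟩ from rfl,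
    MonoidHom.map_mul]

lemma clOf_span (x : R) : clOf (Ideal.span {x} : Ideal R) = 1 := by
  by_cases hx : (Ideal.span {x} : Ideal R) = 0
  · rw [hx, clOf, dif_pos rfl]
  · rw [clOf_ne _ hx]
    exact (ClassGroup.mk0_eq_one_iff _).mpr ⟨⟨x, rfl⟩⟩

lemma clOf_eq_one_iff (I : Ideal R) (hI : I ≠ 0) :
    clOf I = 1 ↔ ∃ f : R, I = Ideal.span {f} := by
  rw [clOf_ne _ hI, ClassGroup.mk0_eq_one_iff]
  exact ⟨fun h => h.principal, fun h => ⟨h⟩⟩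

lemma clOf_prod (t : Multiset (Ideal R)) (h : ∀ P ∈ t, P ≠ 0) :
    clOf t.prod = (t.map clOf).prod := by
  induction t using Multiset.induction with
  | empty => simpa using clOf_one
  | cons I s ih =>
      have hI : I ≠ 0 := h I (Multiset.mem_cons_self I s)
      have hs : ∀ P ∈ s, P ≠ 0 := fun P hP => h P (Multiset.mem_cons_of_mem hP)
      have hs0 : s.prod ≠ 0 := Multiset.prod_ne_zero (fun h0 => hs 0 h0 rfl)
      rw [Multiset.prod_cons, clOf_mul _ _ hI hs0, Multiset.map_cons, Multiset.prod_cons,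
        ih hs]

lemma exists_sub_three {α : Type*} (s : Multiset α) (h : 3 ≤ Multiset.card s) :
    ∃ t : Multiset α, t ≤ s ∧ Multiset.card t = 3 := by
  refine ⟨(s.toList.take 3 : List α), ?_, ?_⟩
  · calc ((s.toList.take 3 : List α) : Multiset α) ≤ (s.toList : Multiset α) :=
        (List.take_sublist 3 s.toList).subperm
      _ = s := s.coe_toList
  · simp only [Multiset.coe_card, List.length_take, Multiset.length_toList]
    omega

/-- Key extraction: three prime ideals of class `g` (with `g ^ 3 = 1`) dividing
both `span x` and `span y` give a common nonunit factor of `x` and `y`. -/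
lemma key_lemma (g : ClassGroup R) (hg3 : g ^ 3 = 1) (x y : R)
    (t : Multiset (Ideal R)) (hpr : ∀ P ∈ t, Prime P)
    (hcl : ∀ P ∈ t, clOf P = g) (hcard : Multiset.card t = 3)
    (htx : t.prod ∣ Ideal.span {x}) (hty : t.prod ∣ Ideal.span {y}) :
    ∃ f : R, ¬IsUnit f ∧ f ∣ x ∧ f ∣ y := by
  have h0 : ∀ P ∈ t, P ≠ 0 := fun P hP => (hpr P hP).ne_zero
  have hprod0 : t.prod ≠ 0 := Multiset.prod_ne_zero (fun h => h0 0 h rfl)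
  have hcl1 : clOf t.prod = 1 := by
    rw [clOf_prod t h0]
    have hrep : t.map clOf = Multiset.replicate 3 g := by
      rw [Multiset.eq_replicate]
      refine ⟨by simp [hcard], ?_⟩
      intro b hb
      obtain ⟨P, hP, rfl⟩ := Multiset.mem_map.mp hb
      exact hcl P hP
    rw [hrep, Multiset.prod_replicate, hg3]
  obtain ⟨f, hf⟩ := (clOf_eq_one_iff _ hprod0).mp hcl1
  refine ⟨f, ?_, ?_, ?_⟩
  · intro hu
    have htop : t.prod = 1 := by
      rw [hf, Ideal.one_eq_top, Ideal.span_singleton_eq_top]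
      exact hu
    obtain ⟨P, hP⟩ := Multiset.card_pos_iff_exists_mem.mp (by omega : 0 < Multiset.card t)
    have : P ∣ t.prod := Multiset.dvd_prod hP
    rw [htop] at this
    exact (hpr P hP).not_unit (isUnit_of_dvd_one this)
  · have : Ideal.span {f} ∣ Ideal.span {x} := hf ▸ htx
    exact Ideal.span_singleton_le_span_singleton.mp (Ideal.le_of_dvd this)
  · have : Ideal.span {f} ∣ Ideal.span {y} := hf ▸ hty
    exact Ideal.span_singleton_le_span_singleton.mp (Ideal.le_of_dvd this)

lemma span_ne_zero {x : R} (hx : x ≠ 0) : (Ideal.span {x} : Ideal R) ≠ 0 := by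
  rw [Ideal.zero_eq_bot, Ne, Ideal.span_singleton_eq_bot]
  exact hx

lemma prod_factors_span {x : R} (hx : x ≠ 0) :
    (normalizedFactors (Ideal.span {x} : Ideal R)).prod = Ideal.span {x} :=
  associated_iff_eq.mp (prod_normalizedFactors (span_ne_zero hx))

end Aux

/-- Let `R` be a Dedekind domain whose class group is cyclic of
order 3 with a generator class `g` containing every nonprincipal prime ideal.
Then `R` has the Z-property. -/
theorem dedekind_zmod3_zproperty (R : Type*) [CommRing R] [IsDomain R]
    [IsDedekindDomain R]
    (hcard : Nat.card (ClassGroup R) = 3)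
    (g : ClassGroup R) (hg : g ≠ 1)
    (hprime : ∀ (P : Ideal R) (hP0 : P ≠ 0), P.IsPrime →
      (¬∃ a : R, P = Ideal.span {a}) →
      ClassGroup.mk0 ⟨P, mem_nonZeroDivisors_of_ne_zero hP0⟩ = g) :
    HasZProperty R := by
  classical
  intro a b c d e ha hb hc hd he hua hub huc hud hue heq
  have habde : a * b ∣ d * e := ⟨c, heq.symm⟩
  by_cases hP : ∃ P ∈ normalizedFactors (Ideal.span {a * b} : Ideal R),
      ∃ p : R, P = Ideal.span {p}
  · obtain ⟨P, hPmem, p, rfl⟩ := hP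
    have hPp : Prime (Ideal.span {p} : Ideal R) := prime_of_normalized_factor _ hPmem
    have hp0 : p ≠ 0 := by
      intro h; subst h
      exact hPp.ne_zero (by simp [Ideal.zero_eq_bot])
    have hp : Prime p := (Ideal.span_singleton_prime hp0).mp (Ideal.isPrime_of_prime hPp)
    have hpab : p ∣ a * b := by
      have h := dvd_of_mem_normalizedFactors hPmem
      exact Ideal.span_singleton_le_span_singleton.mp (Ideal.le_of_dvd h)
    rcases hp.dvd_or_dvd (hpab.trans habde) with h | h
    · exact Or.inl ⟨p, hp.not_unit, hpab, h⟩
    · exact Or.inr ⟨p, hp.not_unit, hpab, h⟩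
  · push_neg at hP
    have hfin : Finite (ClassGroup R) := Nat.finite_of_card_ne_zero (by omega)
    have hord : orderOf g = 3 := by
      have h1 := orderOf_dvd_natCard g
      rw [hcard] at h1
      rcases Nat.prime_three.eq_one_or_self_of_dvd _ h1 with h | h
      · exact absurd (orderOf_eq_one_iff.mp h) hg
      · exact h
    have hg3 : g ^ 3 = 1 := by rw [← hord]; exact pow_orderOf_eq_one g
    have hclg : ∀ P ∈ normalizedFactors (Ideal.span {a * b} : Ideal R), clOf P = g := by
      intro P hPmem
      have hPp := prime_of_normalized_factor P hPmem
      have h0 : P ≠ 0 := hPp.ne_zero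
      rw [clOf_ne P h0]
      exact hprime P h0 (Ideal.isPrime_of_prime hPp) (fun ⟨p, hp⟩ => hP P hPmem p hp)
    have hcardge : ∀ x : R, x ≠ 0 → ¬IsUnit x →
        (∀ P ∈ normalizedFactors (Ideal.span {x} : Ideal R), clOf P = g) →
        3 ≤ Multiset.card (normalizedFactors (Ideal.span {x} : Ideal R)) := by
      intro x hx hux hclx
      have hprodx := prod_factors_span hx
      have h1 : clOf (normalizedFactors (Ideal.span {x} : Ideal R)).prod = 1 := by
        rw [hprodx]; exact clOf_span x
      have h0 : ∀ P ∈ normalizedFactors (Ideal.span {x} : Ideal R), P ≠ 0 :=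
        fun P hPm => (prime_of_normalized_factor P hPm).ne_zero
      rw [clOf_prod _ h0] at h1
      have hrep : (normalizedFactors (Ideal.span {x} : Ideal R)).map clOf
          = Multiset.replicate
              (Multiset.card (normalizedFactors (Ideal.span {x} : Ideal R))) g := by
        rw [Multiset.eq_replicate]
        refine ⟨by simp, ?_⟩
        intro v hv
        obtain ⟨P, hPm, rfl⟩ := Multiset.mem_map.mp hv
        exact hclx P hPm
      rw [hrep, Multiset.prod_replicate] at h1
      have h3 : 3 ∣ Multiset.card (normalizedFactors (Ideal.span {x} : Ideal R)) := by
        rw [← hord]; exact orderOf_dvd_of_pow_eq_one h1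
      have hne : Multiset.card (normalizedFactors (Ideal.span {x} : Ideal R)) ≠ 0 := by
        intro h
        rw [Multiset.card_eq_zero] at h
        rw [h, Multiset.prod_zero] at hprodx
        exact hux (Ideal.span_singleton_eq_top.mp (by rw [← Ideal.one_eq_top, ← hprodx]))
      omega
    have hab0 : a * b ≠ 0 := mul_ne_zero ha hb
    have hde0 : d * e ≠ 0 := mul_ne_zero hd he
    have hfab : normalizedFactors (Ideal.span {a * b} : Ideal R)
        = normalizedFactors (Ideal.span {a} : Ideal R)
          + normalizedFactors (Ideal.span {b} : Ideal R) := by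
      rw [show (Ideal.span {a * b} : Ideal R) = Ideal.span {a} * Ideal.span {b} from
        (Ideal.span_singleton_mul_span_singleton a b).symm]
      exact normalizedFactors_mul (span_ne_zero ha) (span_ne_zero hb)
    have h6 : 6 ≤ Multiset.card (normalizedFactors (Ideal.span {a * b} : Ideal R)) := by
      have h1 := hcardge a ha hua
        (fun P hPm => hclg P (by rw [hfab]; exact Multiset.mem_add.mpr (Or.inl hPm)))
      have h2 := hcardge b hb hub
        (fun P hPm => hclg P (by rw [hfab]; exact Multiset.mem_add.mpr (Or.inr hPm)))
      rw [hfab, Multiset.card_add]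
      omega
    have hfde : normalizedFactors (Ideal.span {d * e} : Ideal R)
        = normalizedFactors (Ideal.span {d} : Ideal R)
          + normalizedFactors (Ideal.span {e} : Ideal R) := by
      rw [show (Ideal.span {d * e} : Ideal R) = Ideal.span {d} * Ideal.span {e} from
        (Ideal.span_singleton_mul_span_singleton d e).symm]
      exact normalizedFactors_mul (span_ne_zero hd) (span_ne_zero he)
    have hdvdI : (Ideal.span {a * b} : Ideal R) ∣ Ideal.span {d * e} :=
      Ideal.dvd_iff_le.mpr (Ideal.span_singleton_le_span_singleton.mpr habde)
    have hle : normalizedFactors (Ideal.span {a * b} : Ideal R)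
        ≤ normalizedFactors (Ideal.span {d} : Ideal R)
          + normalizedFactors (Ideal.span {e} : Ideal R) := by
      rw [← hfde]
      exact (dvd_iff_normalizedFactors_le_normalizedFactors (span_ne_zero hab0)
        (span_ne_zero hde0)).mp hdvdI
    set fAB := normalizedFactors (Ideal.span {a * b} : Ideal R) with hfABdef
    set fD := normalizedFactors (Ideal.span {d} : Ideal R) with hfDdef
    set fE := normalizedFactors (Ideal.span {e} : Ideal R) with hfEdef
    have hsplit : fAB ≤ fAB ∩ fD + fAB ∩ fE := by
      rw [Multiset.le_iff_count]
      intro P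
      have hc1 := Multiset.count_le_of_le P hle
      simp only [Multiset.count_add, Multiset.count_inter] at hc1 ⊢
      omega
    have hcards : 6 ≤ Multiset.card (fAB ∩ fD) + Multiset.card (fAB ∩ fE) := by
      have hcc := Multiset.card_le_card hsplit
      rw [Multiset.card_add] at hcc
      omega
    have main : ∀ y : R, y ≠ 0 →
        3 ≤ Multiset.card (fAB ∩ normalizedFactors (Ideal.span {y} : Ideal R)) →
        ∃ f : R, ¬IsUnit f ∧ f ∣ a * b ∧ f ∣ y := by
      intro y hy hYc
      obtain ⟨t, htle, htc⟩ := exists_sub_three _ hYc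
      have htAB : t ≤ fAB := le_trans htle Multiset.inter_le_left
      have htY : t ≤ normalizedFactors (Ideal.span {y} : Ideal R) :=
        le_trans htle Multiset.inter_le_right
      refine key_lemma g hg3 (a * b) y t ?_ ?_ htc ?_ ?_
      · exact fun P hPt => prime_of_normalized_factor P (Multiset.mem_of_le htAB hPt)
      · exact fun P hPt => hclg P (Multiset.mem_of_le htAB hPt)
      · calc t.prod ∣ fAB.prod := Multiset.prod_dvd_prod_of_le htAB
          _ = Ideal.span {a * b} := prod_factors_span hab0
      · calc t.prod ∣ (normalizedFactors (Ideal.span {y} : Ideal R)).prod :=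
            Multiset.prod_dvd_prod_of_le htY
          _ = Ideal.span {y} := prod_factors_span hy
    rcases (by omega : 3 ≤ Multiset.card (fAB ∩ fD) ∨ 3 ≤ Multiset.card (fAB ∩ fE)) with h | h
    · exact Or.inl (main d hd h)
    · exact Or.inr (main e he h)
end
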